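/- Let X, Y be horizontal vector fields on E (i.e. X(x), Y(x) ∈ Hor_x(p) for all x) that are p-related to vector fields on B. Then for every x ∈ E, the sectional-curvature numerators of B and E are related by g_B( R^B(p_*X_x, p_*Y_x) p_*Y_x, p_*X_x ) = g_E( R^E(X_x, Y_x) Y_x, X_x ) + (3/4) ‖ [X,Y]^{ver} ‖²_{g_E,x}, where p_* = T_xp and [X,Y]^{ver} is the vertical component of the Lie bracket. -/

import Mathlib

/-!
Local-coordinate (chart) model of a Riemannian manifold: points are elements
of `ℝⁿ`, vector fields and 1-forms are given by their component functions on
an open set `U`, and the metric by its matrix of components.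
-/

noncomputable section

namespace RG

/-- Points of the chart. -/
abbrev Pt (n : ℕ) : Type := Fin n → ℝ
/-- Vector fields, by components. -/
abbrev VF (n : ℕ) : Type := Pt n → Fin n → ℝ
/-- 1-forms, by components. -/
abbrev OneForm (n : ℕ) : Type := Pt n → Fin n → ℝ
/-- Metric tensors, by components. -/
abbrev Met (n : ℕ) : Type := Pt n → Matrix (Fin n) (Fin n) ℝ

variable {n : ℕ}

/-- Partial derivative `∂ₛ f`. -/
def pd (s : Fin n) (f : Pt n → ℝ) : Pt n → ℝ := fun x => fderiv ℝ f x (Pi.single s 1)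

/-- Directional derivative `X f` of a function along a vector field. -/
def dder (X : VF n) (f : Pt n → ℝ) : Pt n → ℝ := fun x => fderiv ℝ f x (X x)

/-- Lie bracket `[X, Y]` of vector fields. -/
def bracket (X Y : VF n) : VF n :=
  fun x k => fderiv ℝ (fun y => Y y k) x (X x) - fderiv ℝ (fun y => X y k) x (Y x)

/-- The inverse (co-)metric `g⁻¹`. -/
def ginv (g : Met n) : Met n := fun x => (g x)⁻¹

/-- Pairing `α(X)` of a 1-form with a vector field. -/
def pairF (α : OneForm n) (X : VF n) : Pt n → ℝ := fun x => ∑ i, α x i * X x i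

/-- Metric inner product `g(X,Y)` of vector fields. -/
def gV (g : Met n) (X Y : VF n) : Pt n → ℝ := fun x => ∑ i, ∑ j, g x i j * X x i * Y x j

/-- Co-metric inner product `g⁻¹(α,β)` of 1-forms. -/
def gF (g : Met n) (α β : OneForm n) : Pt n → ℝ :=
  fun x => ∑ i, ∑ j, ginv g x i j * α x i * β x j

/-- Raising indices: `α♯ = g⁻¹ α`. -/
def sharp (g : Met n) (α : OneForm n) : VF n := fun x k => ∑ i, ginv g x i k * α x i

/-- Lowering indices: `X♭ = g X`. -/
def flat (g : Met n) (X : VF n) : OneForm n := fun x k => ∑ i, g x i k * X x i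

/-- Differential `df` of a function, as a 1-form. -/
def dF (f : Pt n → ℝ) : OneForm n := fun x i => pd i f x

/-- Exterior derivative of a 1-form, evaluated on two vector fields:
`dα(X,Y) = Σ (∂ᵢα_j − ∂_jαᵢ) Xⁱ Y^j`. -/
def dOne (α : OneForm n) (X Y : VF n) : Pt n → ℝ :=
  fun x => ∑ i, ∑ j, (pd i (fun y => α y j) x - pd j (fun y => α y i) x) * X x i * Y x j

/-- Christoffel symbols `Γ^k_{ij}` of the Levi-Civita connection. -/
def chr (g : Met n) (k i j : Fin n) : Pt n → ℝ :=
  fun x => (1/2) * ∑ l, ginv g x k l *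
    (pd i (fun y => g y j l) x + pd j (fun y => g y i l) x - pd l (fun y => g y i j) x)

/-- Levi-Civita covariant derivative `∇_X Y` of a vector field. -/
def covV (g : Met n) (X Y : VF n) : VF n :=
  fun x k => fderiv ℝ (fun y => Y y k) x (X x) + ∑ i, ∑ j, chr g k i j x * X x i * Y x j

/-- Levi-Civita covariant derivative `∇_X α` of a 1-form, characterized by
`(∇_X α)(Y) = X(α(Y)) − α(∇_X Y)`. -/
def covF (g : Met n) (X : VF n) (α : OneForm n) : OneForm n :=
  fun x j => fderiv ℝ (fun y => α y j) x (X x) - ∑ i, ∑ k, X x i * chr g k i j x * α x k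

/-- Riemann curvature tensor `R(X,Y)Z = ∇_X∇_Y Z − ∇_Y∇_X Z − ∇_{[X,Y]}Z`. -/
def Rcurv (g : Met n) (X Y Z : VF n) : VF n :=
  covV g X (covV g Y Z) - covV g Y (covV g X Z) - covV g (bracket X Y) Z

/-- Lie derivative of a 1-form along a vector field. -/
def lieF (X : VF n) (α : OneForm n) : OneForm n :=
  fun x i => fderiv ℝ (fun y => α y i) x (X x) + ∑ s, α x s * pd i (fun y => X y s) x

/-- Lie derivative of a contravariant 2-tensor (such as the co-metric `g⁻¹`). -/
def lieCo (X : VF n) (G : Met n) : Met n :=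
  fun x => Matrix.of fun i j =>
    fderiv ℝ (fun y => G y i j) x (X x)
      - ∑ s, G x s j * pd s (fun y => X y i) x
      - ∑ s, G x i s * pd s (fun y => X y j) x

/-- Evaluation of a contravariant 2-tensor on a pair of 1-forms. -/
def evCo (G : Met n) (α β : OneForm n) : Pt n → ℝ :=
  fun x => ∑ i, ∑ j, G x i j * α x i * β x j

/-- Smoothness of (the components of) a 1-form or vector field on `U`. -/
def SmoothSec (U : Set (Pt n)) (ω : Pt n → Fin n → ℝ) : Prop :=
  ∀ i, ContDiffOn ℝ (⊤ : ℕ∞) (fun y => ω y i) U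

/-- Smoothness of the metric components on `U`. -/
def SmoothMet (U : Set (Pt n)) (g : Met n) : Prop :=
  ∀ i j, ContDiffOn ℝ (⊤ : ℕ∞) (fun y => g y i j) U

/-- `g` is a smooth Riemannian metric on `U`. -/
def IsRiemannOn (U : Set (Pt n)) (g : Met n) : Prop :=
  SmoothMet U g ∧ ∀ x ∈ U, (g x).IsSymm ∧ (g x).PosDef

/-- A 1-form is closed on `U`. -/
def IsClosedOn (U : Set (Pt n)) (α : OneForm n) : Prop :=
  ∀ x ∈ U, ∀ i j, pd i (fun y => α y j) x = pd j (fun y => α y i) x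

end RG

open RG

namespace RG

variable {m nb : ℕ}

/-- Pullback `p*α` of a 1-form along a map `p`. -/
def pbF (p : Pt m → Pt nb) (α : OneForm nb) : OneForm m :=
  fun x i => ∑ j, α (p x) j * fderiv ℝ p x (Pi.single i 1) j

/-- Pullback `(T_x p)* ξ` of a covector `ξ` at `p x` to a covector at `x`. -/
def pbCov (p : Pt m → Pt nb) (x : Pt m) (ξ : Fin nb → ℝ) : Fin m → ℝ :=
  fun i => ∑ j, ξ j * fderiv ℝ p x (Pi.single i 1) j

/-- Inner product of tangent vectors at a point, w.r.t. the metric `g`. -/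
def ip {n : ℕ} (g : Met n) (x : Pt n) (v w : Fin n → ℝ) : ℝ :=
  ∑ i, ∑ j, g x i j * v i * w j

/-- Inner product of cotangent vectors at a point, w.r.t. the co-metric `g⁻¹`. -/
def ipCo {n : ℕ} (g : Met n) (x : Pt n) (ξ η : Fin n → ℝ) : ℝ :=
  ∑ i, ∑ j, ginv g x i j * ξ i * η j

/-- `v` is a vertical tangent vector at `x` (tangent to the fiber of `p`). -/
def IsVert (p : Pt m → Pt nb) (x : Pt m) (v : Fin m → ℝ) : Prop :=
  fderiv ℝ p x v = 0

/-- `v` is a horizontal tangent vector at `x`: `g_E`-orthogonal to the vertical space. -/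
def IsHor (gE : Met m) (p : Pt m → Pt nb) (x : Pt m) (v : Fin m → ℝ) : Prop :=
  ∀ w, IsVert p x w → ip gE x v w = 0

/-- `p` is a Riemannian submersion of `(U_E, g_E)` onto `(g_B)`: it is smooth,
its differential is surjective at each point of `U_E`, and `T_x p` is an
isometry from the horizontal space `Hor_x(p)` onto the tangent space below. -/
def IsRiemSubmersionOn (UE : Set (Pt m)) (gE : Met m) (gB : Met nb)
    (p : Pt m → Pt nb) : Prop :=
  (∀ i, ContDiffOn ℝ (⊤ : ℕ∞) (fun x => p x i) UE) ∧
  ∀ x ∈ UE, Function.Surjective (fun v => fderiv ℝ p x v) ∧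
    ∀ v w : Fin m → ℝ, IsHor gE p x v → IsHor gE p x w →
      ip gB (p x) (fderiv ℝ p x v) (fderiv ℝ p x w) = ip gE x v w

end RG

namespace RG
open Matrix

variable {n : ℕ}

/-! ### Calculus helpers -/

theorem pi_single_decomp (c : Pt n) : c = ∑ s, c s • (Pi.single s 1 : Pt n) := by
  funext j
  simp [Pi.single_apply, Finset.sum_apply]

theorem fderiv_eval_sum_pd (f : Pt n → ℝ) (x c : Pt n) :
    fderiv ℝ f x c = ∑ s, c s * pd s f x := by
  conv_lhs => rw [pi_single_decomp c, map_sum]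
  simp [pd, smul_eq_mul]

theorem fd_mul {a b : Pt n → ℝ} {x : Pt n} (ha : DifferentiableAt ℝ a x)
    (hb : DifferentiableAt ℝ b x) (c : Pt n) :
    fderiv ℝ (fun y => a y * b y) x c = fderiv ℝ a x c * b x + a x * fderiv ℝ b x c := by
  rw [fderiv_fun_mul ha hb]; simp; ring

theorem fd_sum {ι : Type*} {s : Finset ι} {F : ι → Pt n → ℝ} {x : Pt n}
    (h : ∀ i ∈ s, DifferentiableAt ℝ (F i) x) (c : Pt n) :
    fderiv ℝ (fun y => ∑ i ∈ s, F i y) x c = ∑ i ∈ s, fderiv ℝ (F i) x c := by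
  rw [fderiv_fun_sum h]; simp

theorem SmoothSec.contDiffAt {U : Set (Pt n)} {X : Pt n → Fin n → ℝ} (hU : IsOpen U)
    (h : SmoothSec U X) {x : Pt n} (hx : x ∈ U) (k : Fin n) :
    ContDiffAt ℝ (⊤ : ℕ∞) (fun y => X y k) x :=
  (h k).contDiffAt (hU.mem_nhds hx)

theorem SmoothSec.diffAt {U : Set (Pt n)} {X : Pt n → Fin n → ℝ} (hU : IsOpen U)
    (h : SmoothSec U X) {x : Pt n} (hx : x ∈ U) (k : Fin n) :
    DifferentiableAt ℝ (fun y => X y k) x :=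
  ((h k).contDiffAt (hU.mem_nhds hx)).differentiableAt (by simp)

theorem smooth_fderiv_apply {U : Set (Pt n)} (hU : IsOpen U) {f : Pt n → ℝ}
    (hf : ContDiffOn ℝ (⊤ : ℕ∞) f U) (w : Pt n) :
    ContDiffOn ℝ (⊤ : ℕ∞) (fun y => fderiv ℝ f y w) U :=
  (hf.fderiv_of_isOpen hU (by simp)).clm_apply contDiffOn_const

end RG
namespace RG
open Matrix

variable {n : ℕ}

theorem SmoothMet.diffAt {U : Set (Pt n)} {g : Met n} (hU : IsOpen U)
    (h : SmoothMet U g) {x : Pt n} (hx : x ∈ U) (i j : Fin n) :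
    DifferentiableAt ℝ (fun y => g y i j) x :=
  ((h i j).contDiffAt (hU.mem_nhds hx)).differentiableAt (by simp)

theorem met_symm_apply {U : Set (Pt n)} {g : Met n} (hg : IsRiemannOn U g)
    {x : Pt n} (hx : x ∈ U) (i j : Fin n) : g x i j = g x j i := by
  have h := (hg.2 x hx).1
  have := congrFun (congrFun h j) i
  simpa [Matrix.transpose_apply] using this

theorem pd_met_symm {U : Set (Pt n)} (hU : IsOpen U) {g : Met n} (hg : IsRiemannOn U g)
    {x : Pt n} (hx : x ∈ U) (s i j : Fin n) :
    pd s (fun y => g y i j) x = pd s (fun y => g y j i) x := by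
  unfold pd
  have hev : (fun y => g y i j) =ᶠ[nhds x] (fun y => g y j i) := by
    filter_upwards [hU.mem_nhds hx] with y hy using met_symm_apply hg hy i j
  rw [hev.fderiv_eq]

theorem ip_symm {g : Met n} {x : Pt n} (hsym : (g x).IsSymm) (v w : Fin n → ℝ) :
    ip g x v w = ip g x w v := by
  unfold ip
  rw [Finset.sum_comm]
  refine Finset.sum_congr rfl fun i _ => Finset.sum_congr rfl fun j _ => ?_
  have : g x j i = g x i j := by
    have := congrFun (congrFun hsym i) j
    simpa [Matrix.transpose_apply] using this
  rw [this]; ring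

theorem met_isUnit_det {U : Set (Pt n)} {g : Met n} (hg : IsRiemannOn U g)
    {x : Pt n} (hx : x ∈ U) : IsUnit (g x).det :=
  (hg.2 x hx).2.det_pos.ne'.isUnit

/-- Lowered Christoffel symbols: `∑ₖ g_{kj} Γ^k_{ia} = ½ (∂ᵢ g_{aj} + ∂ₐ g_{ij} − ∂ⱼ g_{ia})`. -/
theorem lowered_chr {U : Set (Pt n)} {g : Met n} (hg : IsRiemannOn U g)
    {x : Pt n} (hx : x ∈ U) (i a j : Fin n) :
    ∑ k, g x k j * chr g k i a x
      = (1/2) * (pd i (fun y => g y a j) x + pd a (fun y => g y i j) x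
          - pd j (fun y => g y i a) x) := by
  have hdet := met_isUnit_det hg hx
  have hmul : (g x) * (g x)⁻¹ = 1 := Matrix.mul_nonsing_inv _ hdet
  have key : ∀ l, ∑ k, g x k j * ginv g x k l = if j = l then 1 else 0 := by
    intro l
    calc ∑ k, g x k j * ginv g x k l
        = ∑ k, g x j k * (g x)⁻¹ k l := by
          refine Finset.sum_congr rfl fun k _ => ?_
          rw [met_symm_apply hg hx k j]; rfl
      _ = ((g x) * (g x)⁻¹) j l := (Matrix.mul_apply).symm
      _ = (1 : Matrix (Fin n) (Fin n) ℝ) j l := by rw [hmul]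
      _ = if j = l then 1 else 0 := Matrix.one_apply
  set C : Fin n → ℝ := fun l =>
    pd i (fun y => g y a l) x + pd a (fun y => g y i l) x - pd l (fun y => g y i a) x with hC
  calc ∑ k, g x k j * chr g k i a x
      = ∑ k, ∑ l, (g x k j * ginv g x k l) * ((1/2) * C l) := by
        refine Finset.sum_congr rfl fun k _ => ?_
        simp only [chr, Finset.mul_sum]
        refine Finset.sum_congr rfl fun l _ => ?_
        ring
    _ = ∑ l, (∑ k, g x k j * ginv g x k l) * ((1/2) * C l) := by
        rw [Finset.sum_comm]
        exact Finset.sum_congr rfl fun l _ => (Finset.sum_mul _ _ _).symm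
    _ = ∑ l, (if j = l then 1 else 0) * ((1/2) * C l) := by
        refine Finset.sum_congr rfl fun l _ => by rw [key l]
    _ = (1/2) * C j := by
        simp [ite_mul]
end RG
namespace RG
open Matrix

variable {n : ℕ}

/-- Covariant derivative in the direction of a fixed tangent vector `c`. -/
def covD (g : Met n) (c : Pt n) (Y : VF n) : Pt n → Fin n → ℝ :=
  fun x k => fderiv ℝ (fun y => Y y k) x c + ∑ i, ∑ j, chr g k i j x * c i * Y x j

/-- Metric compatibility of the Levi-Civita connection, in coordinates. -/
theorem compat {U : Set (Pt n)} (hU : IsOpen U) {g : Met n} (hg : IsRiemannOn U g)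
    {A B : VF n} (hA : SmoothSec U A) (hB : SmoothSec U B) {x : Pt n} (hx : x ∈ U)
    (c : Pt n) :
    fderiv ℝ (gV g A B) x c
      = ip g x (covD g c A x) (B x) + ip g x (A x) (covD g c B x) := by
  classical
  have hgd : ∀ u w : Fin n, DifferentiableAt ℝ (fun y => g y u w) x :=
    fun u w => SmoothMet.diffAt hU hg.1 hx u w
  have hAd : ∀ u : Fin n, DifferentiableAt ℝ (fun y => A y u) x := hA.diffAt hU hx
  have hBd : ∀ u : Fin n, DifferentiableAt ℝ (fun y => B y u) x := hB.diffAt hU hx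
  set DA : Fin n → ℝ := fun u => fderiv ℝ (fun y => A y u) x c with hDA
  set DB : Fin n → ℝ := fun u => fderiv ℝ (fun y => B y u) x c with hDB
  -- LHS expansion
  have hterm : ∀ u w : Fin n, fderiv ℝ (fun y => g y u w * A y u * B y w) x c
      = (∑ s, c s * pd s (fun y => g y u w) x) * A x u * B x w
        + g x u w * DA u * B x w + g x u w * A x u * DB w := by
    intro u w
    have h1 : DifferentiableAt ℝ (fun y => g y u w * A y u) x := (hgd u w).mul (hAd u)
    rw [show (fun y => g y u w * A y u * B y w)
        = (fun y => (fun z => g z u w * A z u) y * B y w) from rfl]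
    rw [fd_mul h1 (hBd w) c, fd_mul (hgd u w) (hAd u) c,
      fderiv_eval_sum_pd (fun y => g y u w) x c]
    ring
  have hL : fderiv ℝ (gV g A B) x c
      = ∑ u, ∑ w, ((∑ s, c s * pd s (fun y => g y u w) x) * A x u * B x w
          + g x u w * DA u * B x w + g x u w * A x u * DB w) := by
    have e1 : gV g A B = fun y => ∑ u, ∑ w, g y u w * A y u * B y w := rfl
    rw [e1, fd_sum (fun u _ => DifferentiableAt.fun_sum
      (fun w _ => ((hgd u w).fun_mul (hAd u)).fun_mul (hBd w))) c]
    refine Finset.sum_congr rfl fun u _ => ?_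
    rw [fd_sum (fun w _ => ((hgd u w).fun_mul (hAd u)).fun_mul (hBd w)) c]
    exact Finset.sum_congr rfl fun w _ => hterm u w
  -- the three normal-form pieces
  set T0 : ℝ := ∑ s, ∑ u, ∑ w, c s * pd s (fun y => g y u w) x * A x u * B x w with hT0
  set T1 : ℝ := ∑ u, ∑ w, g x u w * DA u * B x w with hT1
  set T2 : ℝ := ∑ u, ∑ w, g x u w * A x u * DB w with hT2
  have hLnf : fderiv ℝ (gV g A B) x c = T0 + T1 + T2 := by
    rw [hL, hT0, hT1, hT2]
    rw [show (∑ s, ∑ u, ∑ w, c s * pd s (fun y => g y u w) x * A x u * B x w)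
        = ∑ u, ∑ w, ∑ s, c s * pd s (fun y => g y u w) x * A x u * B x w from by
      rw [Finset.sum_comm]
      exact Finset.sum_congr rfl fun u _ => Finset.sum_comm]
    rw [← Finset.sum_add_distrib, ← Finset.sum_add_distrib]
    refine Finset.sum_congr rfl fun u _ => ?_
    rw [← Finset.sum_add_distrib, ← Finset.sum_add_distrib]
    refine Finset.sum_congr rfl fun w _ => ?_
    rw [Finset.sum_mul, Finset.sum_mul]
  -- Γ-term contraction helper
  have hGam : ∀ (V : Fin n → ℝ) (w : Fin n),
      ∑ k, g x k w * (∑ s, ∑ u, chr g k s u x * c s * V u)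
        = ∑ s, ∑ u, ((1/2) * (pd s (fun y => g y u w) x + pd u (fun y => g y s w) x
            - pd w (fun y => g y s u) x)) * (c s * V u) := by
    intro V w
    calc ∑ k, g x k w * (∑ s, ∑ u, chr g k s u x * c s * V u)
        = ∑ k, ∑ s, ∑ u, (g x k w * chr g k s u x) * (c s * V u) := by
          refine Finset.sum_congr rfl fun k _ => ?_
          rw [Finset.mul_sum]
          refine Finset.sum_congr rfl fun s _ => ?_
          rw [Finset.mul_sum]
          exact Finset.sum_congr rfl fun u _ => by ring
      _ = ∑ s, ∑ k, ∑ u, (g x k w * chr g k s u x) * (c s * V u) := Finset.sum_comm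
      _ = ∑ s, ∑ u, ∑ k, (g x k w * chr g k s u x) * (c s * V u) :=
          Finset.sum_congr rfl fun s _ => Finset.sum_comm
      _ = ∑ s, ∑ u, (∑ k, g x k w * chr g k s u x) * (c s * V u) := by
          refine Finset.sum_congr rfl fun s _ => Finset.sum_congr rfl fun u _ => ?_
          rw [Finset.sum_mul]
      _ = ∑ s, ∑ u, ((1/2) * (pd s (fun y => g y u w) x + pd u (fun y => g y s w) x
            - pd w (fun y => g y s u) x)) * (c s * V u) := by
          refine Finset.sum_congr rfl fun s _ => Finset.sum_congr rfl fun u _ => ?_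
          rw [lowered_chr hg hx s u w]
  -- RHS first piece
  have hR1 : ip g x (covD g c A x) (B x)
      = T1 + ∑ s, ∑ u, ∑ w, ((1/2) * (pd s (fun y => g y u w) x
          + pd u (fun y => g y s w) x - pd w (fun y => g y s u) x))
          * (c s * A x u * B x w) := by
    unfold ip covD
    calc (∑ k, ∑ w, g x k w * (DA k + ∑ s, ∑ u, chr g k s u x * c s * A x u) * B x w)
        = (∑ k, ∑ w, g x k w * DA k * B x w)
          + ∑ w, ∑ k, (g x k w * (∑ s, ∑ u, chr g k s u x * c s * A x u)) * B x w := by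
          rw [show (∑ w, ∑ k, (g x k w * (∑ s, ∑ u, chr g k s u x * c s * A x u)) * B x w)
              = ∑ k, ∑ w, (g x k w * (∑ s, ∑ u, chr g k s u x * c s * A x u)) * B x w
              from Finset.sum_comm]
          rw [← Finset.sum_add_distrib]
          refine Finset.sum_congr rfl fun k _ => ?_
          rw [← Finset.sum_add_distrib]
          exact Finset.sum_congr rfl fun w _ => by ring
      _ = T1 + ∑ w, (∑ k, g x k w * (∑ s, ∑ u, chr g k s u x * c s * A x u)) * B x w := by
          rw [hT1]
          congr 1
          exact Finset.sum_congr rfl fun w _ => (Finset.sum_mul _ _ _).symm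
      _ = T1 + ∑ w, (∑ s, ∑ u, ((1/2) * (pd s (fun y => g y u w) x
            + pd u (fun y => g y s w) x - pd w (fun y => g y s u) x)) * (c s * A x u)) * B x w := by
          congr 1
          exact Finset.sum_congr rfl fun w _ => by rw [hGam (fun u => A x u) w]
      _ = ∑ w, ∑ s, ∑ u, ((1/2) * (pd s (fun y => g y u w) x
            + pd u (fun y => g y s w) x - pd w (fun y => g y s u) x)) * (c s * A x u * B x w)
            + T1 := by
          rw [add_comm]
          congr 1
          refine Finset.sum_congr rfl fun w _ => ?_
          rw [Finset.sum_mul]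
          refine Finset.sum_congr rfl fun s _ => ?_
          rw [Finset.sum_mul]
          exact Finset.sum_congr rfl fun u _ => by ring
      _ = T1 + ∑ s, ∑ u, ∑ w, ((1/2) * (pd s (fun y => g y u w) x
            + pd u (fun y => g y s w) x - pd w (fun y => g y s u) x))
            * (c s * A x u * B x w) := by
          rw [add_comm]
          congr 1
          rw [Finset.sum_comm]
          exact Finset.sum_congr rfl fun s _ => Finset.sum_comm
  -- RHS second piece
  have hR2 : ip g x (A x) (covD g c B x)
      = T2 + ∑ s, ∑ u, ∑ w, ((1/2) * (pd s (fun y => g y w u) x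
          + pd w (fun y => g y s u) x - pd u (fun y => g y s w) x))
          * (c s * A x u * B x w) := by
    unfold ip covD
    calc (∑ u, ∑ k, g x u k * A x u * (DB k + ∑ s, ∑ w, chr g k s w x * c s * B x w))
        = (∑ u, ∑ k, g x u k * A x u * DB k)
          + ∑ u, A x u * ∑ k, g x k u * (∑ s, ∑ w, chr g k s w x * c s * B x w) := by
          rw [← Finset.sum_add_distrib]
          refine Finset.sum_congr rfl fun u _ => ?_
          rw [Finset.mul_sum, ← Finset.sum_add_distrib]
          refine Finset.sum_congr rfl fun k _ => ?_
          rw [met_symm_apply hg hx k u]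
          ring
      _ = T2 + ∑ u, A x u * ∑ s, ∑ w, ((1/2) * (pd s (fun y => g y w u) x
            + pd w (fun y => g y s u) x - pd u (fun y => g y s w) x)) * (c s * B x w) := by
          rw [hT2]
          congr 1
          exact Finset.sum_congr rfl fun u _ => by rw [hGam (fun w => B x w) u]
      _ = T2 + ∑ u, ∑ s, ∑ w, ((1/2) * (pd s (fun y => g y w u) x
            + pd w (fun y => g y s u) x - pd u (fun y => g y s w) x))
            * (c s * A x u * B x w) := by
          congr 1
          refine Finset.sum_congr rfl fun u _ => ?_
          rw [Finset.mul_sum]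
          refine Finset.sum_congr rfl fun s _ => ?_
          rw [Finset.mul_sum]
          exact Finset.sum_congr rfl fun w _ => by ring
      _ = T2 + ∑ s, ∑ u, ∑ w, ((1/2) * (pd s (fun y => g y w u) x
            + pd w (fun y => g y s u) x - pd u (fun y => g y s w) x))
            * (c s * A x u * B x w) := by
          congr 1
          exact Finset.sum_comm
  -- combine
  rw [hLnf, hR1, hR2]
  have hT0eq : T0 = (∑ s, ∑ u, ∑ w, ((1/2) * (pd s (fun y => g y u w) x
      + pd u (fun y => g y s w) x - pd w (fun y => g y s u) x)) * (c s * A x u * B x w))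
      + ∑ s, ∑ u, ∑ w, ((1/2) * (pd s (fun y => g y w u) x
      + pd w (fun y => g y s u) x - pd u (fun y => g y s w) x)) * (c s * A x u * B x w) := by
    rw [hT0, ← Finset.sum_add_distrib]
    refine Finset.sum_congr rfl fun s _ => ?_
    rw [← Finset.sum_add_distrib]
    refine Finset.sum_congr rfl fun u _ => ?_
    rw [← Finset.sum_add_distrib]
    refine Finset.sum_congr rfl fun w _ => ?_
    rw [pd_met_symm hU hg hx s w u]
    ring
  rw [hT0eq]
  ring

end RG
namespace RG
open Matrix

variable {n : ℕ}

theorem chr_symm {U : Set (Pt n)} (hU : IsOpen U) {g : Met n} (hg : IsRiemannOn U g)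
    {x : Pt n} (hx : x ∈ U) (k i j : Fin n) : chr g k i j x = chr g k j i x := by
  unfold chr
  congr 1
  refine Finset.sum_congr rfl fun l _ => ?_
  rw [pd_met_symm hU hg hx l i j]
  ring

/-- The Levi-Civita connection is torsion-free, in coordinates. -/
theorem torsion {U : Set (Pt n)} (hU : IsOpen U) {g : Met n} (hg : IsRiemannOn U g)
    (A B : VF n) {x : Pt n} (hx : x ∈ U) :
    covV g B A x = fun k => covV g A B x k - bracket A B x k := by
  funext k
  unfold covV bracket
  have : (∑ i, ∑ j, chr g k i j x * B x i * A x j)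
      = ∑ i, ∑ j, chr g k i j x * A x i * B x j := by
    rw [Finset.sum_comm]
    refine Finset.sum_congr rfl fun i _ => Finset.sum_congr rfl fun j _ => ?_
    rw [chr_symm hU hg hx k j i]
    ring
  rw [this]
  ring

theorem ip_sub_left (g : Met n) (x : Pt n) (u v w : Fin n → ℝ) :
    ip g x (fun k => u k - v k) w = ip g x u w - ip g x v w := by
  unfold ip
  rw [← Finset.sum_sub_distrib]
  refine Finset.sum_congr rfl fun i _ => ?_
  rw [← Finset.sum_sub_distrib]
  exact Finset.sum_congr rfl fun j _ => by ring

theorem ip_add_left (g : Met n) (x : Pt n) (u v w : Fin n → ℝ) :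
    ip g x (fun k => u k + v k) w = ip g x u w + ip g x v w := by
  unfold ip
  rw [← Finset.sum_add_distrib]
  refine Finset.sum_congr rfl fun i _ => ?_
  rw [← Finset.sum_add_distrib]
  exact Finset.sum_congr rfl fun j _ => by ring

theorem ip_sub_right (g : Met n) (x : Pt n) (u v w : Fin n → ℝ) :
    ip g x w (fun k => u k - v k) = ip g x w u - ip g x w v := by
  unfold ip
  rw [← Finset.sum_sub_distrib]
  refine Finset.sum_congr rfl fun i _ => ?_
  rw [← Finset.sum_sub_distrib]
  exact Finset.sum_congr rfl fun j _ => by ring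

/-- The Koszul formula, in coordinates. -/
theorem koszul {U : Set (Pt n)} (hU : IsOpen U) {g : Met n} (hg : IsRiemannOn U g)
    {A B Z : VF n} (hA : SmoothSec U A) (hB : SmoothSec U B) (hZ : SmoothSec U Z)
    {x : Pt n} (hx : x ∈ U) :
    2 * ip g x (covV g A B x) (Z x)
      = fderiv ℝ (gV g B Z) x (A x) + fderiv ℝ (gV g A Z) x (B x)
        - fderiv ℝ (gV g A B) x (Z x)
        + ip g x (bracket A B x) (Z x) - ip g x (B x) (bracket A Z x)
        - ip g x (A x) (bracket B Z x) := by
  have hsym := (hg.2 x hx).1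
  have e1 := compat hU hg hB hZ hx (A x)
  have e2 := compat hU hg hA hZ hx (B x)
  have e3 := compat hU hg hA hB hx (Z x)
  -- identify covD with covV
  have c1 : covD g (A x) B x = covV g A B x := rfl
  have c2 : covD g (A x) Z x = covV g A Z x := rfl
  have c3 : covD g (B x) A x = covV g B A x := rfl
  have c4 : covD g (B x) Z x = covV g B Z x := rfl
  have c5 : covD g (Z x) A x = covV g Z A x := rfl
  have c6 : covD g (Z x) B x = covV g Z B x := rfl
  rw [c1, c2] at e1
  rw [c3, c4] at e2
  rw [c5, c6] at e3
  -- torsion rewrites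
  rw [torsion hU hg A B hx] at e2
  rw [torsion hU hg A Z hx] at e3
  rw [torsion hU hg B Z hx] at e3
  rw [ip_sub_left] at e2 e3
  rw [ip_sub_right] at e3
  rw [e1, e2, e3]
  -- symmetry normalizations
  rw [ip_symm hsym (covV g A Z x) (B x), ip_symm hsym (bracket A Z x) (B x)]
  ring

end RG
namespace RG
open Matrix

/-! ### Chain rule helpers and `p`-relatedness of brackets -/

theorem fderiv_apply_comp_proj {m q : ℕ} {p : Pt m → Pt q} {x : Pt m}
    (hp : DifferentiableAt ℝ p x) (u : Pt m) (j : Fin q) :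
    fderiv ℝ p x u j = fderiv ℝ (fun y => p y j) x u := by
  have h := ((ContinuousLinearMap.proj j : Pt q →L[ℝ] ℝ).hasFDerivAt.comp x
    hp.hasFDerivAt).fderiv
  rw [show (fun y => p y j) = (⇑(ContinuousLinearMap.proj j : Pt q →L[ℝ] ℝ)) ∘ p from rfl, h]
  rfl

theorem fderiv_scalar_comp {m q : ℕ} {p : Pt m → Pt q} {f : Pt q → ℝ} {x : Pt m}
    (hp : DifferentiableAt ℝ p x) (hf : DifferentiableAt ℝ f (p x)) (u : Pt m) :
    fderiv ℝ (fun y => f (p y)) x u = fderiv ℝ f (p x) (fderiv ℝ p x u) := by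
  rw [show (fun y => f (p y)) = f ∘ p from rfl, fderiv_comp x hf hp]
  rfl

theorem diffAt_pi_of_sec {q n : ℕ} {U : Set (Pt n)} (hU : IsOpen U) {X : Pt n → Fin q → ℝ}
    (hX : ∀ i, ContDiffOn ℝ (⊤ : ℕ∞) (fun y => X y i) U) {x : Pt n} (hx : x ∈ U) :
    DifferentiableAt ℝ X x :=
  differentiableAt_pi.2 fun i => ((hX i).contDiffAt (hU.mem_nhds hx)).differentiableAt (by simp)

/-- p-relatedness of Lie brackets. -/
theorem bracket_related {m nb : ℕ} {UE : Set (Pt m)} (hUE : IsOpen UE)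
    {p : Pt m → Pt nb} (hp : ∀ i, ContDiffOn ℝ (⊤ : ℕ∞) (fun x => p x i) UE)
    {A B : VF m} (hA : SmoothSec UE A) (hB : SmoothSec UE B)
    {Ab Bb : VF nb} {x : Pt m} (hx : x ∈ UE)
    (hAb : ∀ j, DifferentiableAt ℝ (fun z => Ab z j) (p x))
    (hBb : ∀ j, DifferentiableAt ℝ (fun z => Bb z j) (p x))
    (hArel : ∀ y ∈ UE, fderiv ℝ p y (A y) = Ab (p y))
    (hBrel : ∀ y ∈ UE, fderiv ℝ p y (B y) = Bb (p y)) :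
    fderiv ℝ p x (bracket A B x) = bracket Ab Bb (p x) := by
  have hpdiff : ∀ y ∈ UE, DifferentiableAt ℝ p y := fun y hy => diffAt_pi_of_sec hUE hp hy
  have hpx := hpdiff x hx
  funext j
  set q : Pt m → ℝ := fun y => p y j with hq
  have hqC : ContDiffAt ℝ (⊤ : ℕ∞) q x := (hp j).contDiffAt (hUE.mem_nhds hx)
  set c : Pt m → (Pt m →L[ℝ] ℝ) := fun y => fderiv ℝ q y with hc
  have hcsm : ContDiffOn ℝ (⊤ : ℕ∞) c UE := (hp j).fderiv_of_isOpen hUE (by simp)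
  have hcd : DifferentiableAt ℝ c x :=
    (hcsm.contDiffAt (hUE.mem_nhds hx)).differentiableAt (by simp)
  have hAdp : DifferentiableAt ℝ A x := diffAt_pi_of_sec hUE hA hx
  have hBdp : DifferentiableAt ℝ B x := diffAt_pi_of_sec hUE hB hx
  have hsymm : IsSymmSndFDerivAt ℝ q x := hqC.isSymmSndFDerivAt (by rw [minSmoothness_of_isRCLikeNormedField]; exact WithTop.coe_le_coe.2 (le_top : (2 : ℕ∞) ≤ ⊤))
  -- the two differentiated relatedness identities
  have key : ∀ (C : VF m) (Cb : VF nb), SmoothSec UE C →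
      (∀ y ∈ UE, fderiv ℝ p y (C y) = Cb (p y)) →
      DifferentiableAt ℝ C x →
      ∀ (D : VF m) (Db : VF nb), (∀ y ∈ UE, fderiv ℝ p y (D y) = Db (p y)) →
      DifferentiableAt ℝ (fun z => Cb z j) (p x) →
      (c x) (fderiv ℝ C x (D x)) + (fderiv ℝ c x (D x)) (C x)
        = fderiv ℝ (fun z => Cb z j) (p x) (Db (p x)) := by
    intro C Cb hC hCrel hCd D Db hDrel hCbd
    have hEq : (fun y => (c y) (C y)) =ᶠ[nhds x] (fun y => Cb (p y) j) := by
      filter_upwards [hUE.mem_nhds hx] with y hy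
      have := congrFun (hCrel y hy) j
      rw [fderiv_apply_comp_proj (hpdiff y hy) (C y) j] at this
      exact this
    have hL : fderiv ℝ (fun y => (c y) (C y)) x
        = (c x).comp (fderiv ℝ C x) + (fderiv ℝ c x).flip (C x) :=
      fderiv_clm_apply hcd hCd
    have hR : fderiv ℝ (fun y => Cb (p y) j) x (D x)
        = fderiv ℝ (fun z => Cb z j) (p x) (Db (p x)) := by
      rw [fderiv_scalar_comp hpx hCbd (D x), hDrel x hx]
    calc (c x) (fderiv ℝ C x (D x)) + (fderiv ℝ c x (D x)) (C x)
        = ((c x).comp (fderiv ℝ C x) + (fderiv ℝ c x).flip (C x)) (D x) := by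
          simp [ContinuousLinearMap.add_apply]
      _ = fderiv ℝ (fun y => (c y) (C y)) x (D x) := by rw [hL]
      _ = fderiv ℝ (fun y => Cb (p y) j) x (D x) := by rw [hEq.fderiv_eq]
      _ = fderiv ℝ (fun z => Cb z j) (p x) (Db (p x)) := hR
  have kA := key A Ab hA hArel hAdp B Bb hBrel (hAb j)
  have kB := key B Bb hB hBrel hBdp A Ab hArel (hBb j)
  -- express the bracket as a difference of total derivatives
  have hbr : bracket A B x = (fun k => fderiv ℝ B x (A x) k - fderiv ℝ A x (B x) k) := by
    funext k
    unfold bracket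
    rw [fderiv_apply_comp_proj hBdp (A x) k, fderiv_apply_comp_proj hAdp (B x) k]
  have hlhs : fderiv ℝ p x (bracket A B x) j
      = (c x) (fderiv ℝ B x (A x)) - (c x) (fderiv ℝ A x (B x)) := by
    rw [fderiv_apply_comp_proj hpx (bracket A B x) j, hbr]
    have : (fun k => fderiv ℝ B x (A x) k - fderiv ℝ A x (B x) k)
        = fderiv ℝ B x (A x) - fderiv ℝ A x (B x) := rfl
    rw [this, map_sub]
  rw [hlhs]
  have hsw : (fderiv ℝ c x (A x)) (B x) = (fderiv ℝ c x (B x)) (A x) := hsymm.eq (A x) (B x)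
  unfold bracket
  have e1 : (c x) (fderiv ℝ B x (A x))
      = fderiv ℝ (fun z => Bb z j) (p x) (Ab (p x)) - (fderiv ℝ c x (A x)) (B x) := by
    linarith [kB]
  have e2 : (c x) (fderiv ℝ A x (B x))
      = fderiv ℝ (fun z => Ab z j) (p x) (Bb (p x)) - (fderiv ℝ c x (B x)) (A x) := by
    linarith [kA]
  rw [e1, e2, hsw]
  ring

end RG
namespace RG
open Matrix

variable {n : ℕ}

/-- Entrywise smoothness of a matrix-valued function. -/
def SmoothMat {n : ℕ} (U : Set (Pt n)) {ι κ : Type*} (M : Pt n → Matrix ι κ ℝ) : Prop :=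
  ∀ i j, ContDiffOn ℝ (⊤ : ℕ∞) (fun y => M y i j) U

theorem SmoothMat.mul {U : Set (Pt n)} {ι κ τ : Type*} [Fintype κ]
    {M : Pt n → Matrix ι κ ℝ} {N : Pt n → Matrix κ τ ℝ}
    (hM : SmoothMat U M) (hN : SmoothMat U N) :
    SmoothMat U (fun y => M y * N y) := by
  intro i j
  have : (fun y => (M y * N y) i j) = fun y => ∑ k, M y i k * N y k j := by
    funext y; rw [Matrix.mul_apply]
  rw [this]
  exact ContDiffOn.sum fun k _ => (hM i k).mul (hN k j)

theorem SmoothMat.transpose {U : Set (Pt n)} {ι κ : Type*}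
    {M : Pt n → Matrix ι κ ℝ} (hM : SmoothMat U M) :
    SmoothMat U (fun y => (M y)ᵀ) := fun i j => hM j i

theorem SmoothMat.det {U : Set (Pt n)} {ι : Type*} [Fintype ι] [DecidableEq ι]
    {M : Pt n → Matrix ι ι ℝ} (hM : SmoothMat U M) :
    ContDiffOn ℝ (⊤ : ℕ∞) (fun y => (M y).det) U := by
  have : (fun y => (M y).det)
      = fun y => ∑ σ : Equiv.Perm ι, (Equiv.Perm.sign σ : ℤ) * ∏ i, M y (σ i) i := by
    funext y; rw [Matrix.det_apply]
    exact Finset.sum_congr rfl fun σ _ => by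
      simp [Units.smul_def, zsmul_eq_mul]
  rw [this]
  exact ContDiffOn.sum fun σ _ =>
    (contDiffOn_const.mul (contDiffOn_prod fun i _ => hM (σ i) i))

theorem SmoothMat.adjugate {U : Set (Pt n)} {ι : Type*} [Fintype ι] [DecidableEq ι]
    {M : Pt n → Matrix ι ι ℝ} (hM : SmoothMat U M) :
    SmoothMat U (fun y => (M y).adjugate) := by
  intro i j
  have : (fun y => (M y).adjugate i j)
      = fun y => ((M y).updateRow j (Pi.single i 1)).det := by
    funext y; rw [Matrix.adjugate_apply]
  rw [this]
  refine SmoothMat.det (fun k l => ?_)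
  by_cases hk : k = j
  · subst hk
    have : (fun y => (M y).updateRow k (Pi.single i 1) k l) = fun _ => (Pi.single i (1:ℝ) : ι → ℝ) l := by
      funext y; rw [Matrix.updateRow_self]
    rw [this]; exact contDiffOn_const
  · have : (fun y => (M y).updateRow j (Pi.single i 1) k l) = fun y => M y k l := by
      funext y; rw [Matrix.updateRow_ne hk]
    rw [this]; exact hM k l

theorem SmoothMat.inv {U : Set (Pt n)} {ι : Type*} [Fintype ι] [DecidableEq ι]
    {M : Pt n → Matrix ι ι ℝ} (hM : SmoothMat U M)
    (hdet : ∀ y ∈ U, (M y).det ≠ 0) :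
    SmoothMat U (fun y => (M y)⁻¹) := by
  intro i j
  have : (fun y => (M y)⁻¹ i j) = fun y => ((M y).det)⁻¹ * (M y).adjugate i j := by
    funext y
    rw [Matrix.inv_def, Matrix.smul_apply, Ring.inverse_eq_inv', smul_eq_mul]
  rw [this]
  exact (hM.det.inv hdet).mul (hM.adjugate i j)

/-- `ip` as a dot product. -/
theorem ip_eq_dot {g : Met n} {x : Pt n} (v w : Fin n → ℝ) :
    ip g x v w = v ⬝ᵥ (g x *ᵥ w) := by
  unfold ip
  rw [dotProduct]
  refine Finset.sum_congr rfl fun i _ => ?_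
  rw [Matrix.mulVec, dotProduct, Finset.mul_sum]
  exact Finset.sum_congr rfl fun j _ => by ring

theorem posdef_ip_self {g : Met n} {x : Pt n} (hpos : (g x).PosDef)
    {v : Fin n → ℝ} (hv : ip g x v v = 0) : v = 0 := by
  by_contra h
  have := hpos.dotProduct_mulVec_pos h
  rw [star_trivial] at this
  rw [ip_eq_dot] at hv
  linarith

end RG
namespace RG
open Matrix

section Submersion
variable {m nb : ℕ}

theorem dot_mulVec_left {ι κ : Type*} [Fintype ι] [Fintype κ]
    (A : Matrix ι κ ℝ) (z : κ → ℝ) (v : ι → ℝ) :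
    (A *ᵥ z) ⬝ᵥ v = z ⬝ᵥ (Aᵀ *ᵥ v) := by
  rw [dotProduct_comm, Matrix.dotProduct_mulVec, ← Matrix.mulVec_transpose, dotProduct_comm]

def Pmat (p : Pt m → Pt nb) : Pt m → Matrix (Fin nb) (Fin m) ℝ :=
  fun y => Matrix.of fun a i => fderiv ℝ (fun z => p z a) y (Pi.single i 1)

theorem fderiv_eq_Pmat {p : Pt m → Pt nb} {y : Pt m} (hp : DifferentiableAt ℝ p y)
    (u : Pt m) : fderiv ℝ p y u = Pmat p y *ᵥ u := by
  funext a
  rw [fderiv_apply_comp_proj hp u a, fderiv_eval_sum_pd, Matrix.mulVec, dotProduct]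
  exact Finset.sum_congr rfl fun s _ => by simp [Pmat, pd, mul_comm]

def GramM (gE : Met m) (p : Pt m → Pt nb) : Pt m → Matrix (Fin nb) (Fin nb) ℝ :=
  fun y => Pmat p y * ginv gE y * (Pmat p y)ᵀ

def LmatM (gE : Met m) (p : Pt m → Pt nb) : Pt m → Matrix (Fin m) (Fin nb) ℝ :=
  fun y => ginv gE y * (Pmat p y)ᵀ * (GramM gE p y)⁻¹

variable {UE : Set (Pt m)} {gE : Met m} {gB : Met nb} {p : Pt m → Pt nb}

theorem smooth_Pmat (hUE : IsOpen UE) (hp : ∀ i, ContDiffOn ℝ (⊤ : ℕ∞) (fun x => p x i) UE) :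
    SmoothMat UE (Pmat p) := fun a i => smooth_fderiv_apply hUE (hp a) _

theorem smooth_ginv (hUE : IsOpen UE) (hgE : IsRiemannOn UE gE) :
    SmoothMat UE (ginv gE) :=
  SmoothMat.inv (M := fun y => gE y) hgE.1 fun y hy => ((hgE.2 y hy).2.det_pos).ne'

theorem ginv_transpose (hgE : IsRiemannOn UE gE) {y : Pt m} (hy : y ∈ UE) :
    (ginv gE y)ᵀ = ginv gE y := by
  show ((gE y)⁻¹)ᵀ = (gE y)⁻¹
  rw [Matrix.transpose_nonsing_inv, (hgE.2 y hy).1]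

theorem ginv_mul_met (hgE : IsRiemannOn UE gE) {y : Pt m} (hy : y ∈ UE) :
    ginv gE y * gE y = 1 :=
  Matrix.nonsing_inv_mul _ (met_isUnit_det hgE hy)

theorem isVert_iff {y : Pt m} (hpd : DifferentiableAt ℝ p y) (v : Fin m → ℝ) :
    IsVert p y v ↔ Pmat p y *ᵥ v = 0 := by
  unfold IsVert; rw [fderiv_eq_Pmat hpd]

theorem gram_posdef (hUE : IsOpen UE) (hgE : IsRiemannOn UE gE)
    (hsub : IsRiemSubmersionOn UE gE gB p) {y : Pt m} (hy : y ∈ UE) :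
    (GramM gE p y).PosDef := by
  have hpd : DifferentiableAt ℝ p y := diffAt_pi_of_sec hUE hsub.1 hy
  have hGinvT := ginv_transpose hgE hy
  refine Matrix.PosDef.of_dotProduct_mulVec_pos ?_ ?_
  · show (GramM gE p y)ᴴ = GramM gE p y
    have ht : (GramM gE p y)ᵀ = GramM gE p y := by
      unfold GramM
      rw [Matrix.transpose_mul, Matrix.transpose_mul, Matrix.transpose_transpose,
        hGinvT, Matrix.mul_assoc]
    calc (GramM gE p y)ᴴ = (GramM gE p y)ᵀ := by
          funext a b; simp [Matrix.conjTranspose_apply]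
      _ = GramM gE p y := ht
  · intro z hz
    rw [star_trivial]
    have hGz : GramM gE p y *ᵥ z = Pmat p y *ᵥ (ginv gE y *ᵥ ((Pmat p y)ᵀ *ᵥ z)) := by
      unfold GramM
      rw [Matrix.mulVec_mulVec, Matrix.mulVec_mulVec]
    rw [hGz, Matrix.dotProduct_mulVec, ← Matrix.mulVec_transpose]
    set u : Fin m → ℝ := (Pmat p y)ᵀ *ᵥ z with hu
    have hune : u ≠ 0 := by
      intro h0
      have hall : ∀ t : Pt nb, z ⬝ᵥ t = 0 := by
        intro t
        obtain ⟨v, hv⟩ := (hsub.2 y hy).1 t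
        have hPv : Pmat p y *ᵥ v = t := by rw [← fderiv_eq_Pmat hpd]; exact hv
        rw [← hPv, Matrix.dotProduct_mulVec, ← Matrix.mulVec_transpose, ← hu, h0,
          zero_dotProduct]
      exact hz (by
        have := hall z
        rwa [dotProduct_self_eq_zero] at this)
    have hpos := ((hgE.2 y hy).2.inv).dotProduct_mulVec_pos hune
    rw [star_trivial] at hpos
    exact hpos

theorem gram_isUnit_det (hUE : IsOpen UE) (hgE : IsRiemannOn UE gE)
    (hsub : IsRiemSubmersionOn UE gE gB p) {y : Pt m} (hy : y ∈ UE) :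
    IsUnit (GramM gE p y).det :=
  (gram_posdef hUE hgE hsub hy).det_pos.ne'.isUnit

theorem Pmat_mul_Lmat (hUE : IsOpen UE) (hgE : IsRiemannOn UE gE)
    (hsub : IsRiemSubmersionOn UE gE gB p) {y : Pt m} (hy : y ∈ UE) :
    Pmat p y * LmatM gE p y = 1 := by
  unfold LmatM
  rw [← Matrix.mul_assoc, ← Matrix.mul_assoc]
  rw [show Pmat p y * ginv gE y * (Pmat p y)ᵀ = GramM gE p y from rfl]
  exact Matrix.mul_nonsing_inv _ (gram_isUnit_det hUE hgE hsub hy)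

theorem Lmat_push (hUE : IsOpen UE) (hgE : IsRiemannOn UE gE)
    (hsub : IsRiemSubmersionOn UE gE gB p) {y : Pt m} (hy : y ∈ UE) (z : Fin nb → ℝ) :
    Pmat p y *ᵥ (LmatM gE p y *ᵥ z) = z := by
  rw [Matrix.mulVec_mulVec, Pmat_mul_Lmat hUE hgE hsub hy, Matrix.one_mulVec]

theorem Lmat_hor (hUE : IsOpen UE) (hgE : IsRiemannOn UE gE)
    (hsub : IsRiemSubmersionOn UE gE gB p) {y : Pt m} (hy : y ∈ UE) (z : Fin nb → ℝ) :
    IsHor gE p y (LmatM gE p y *ᵥ z) := by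
  intro w hw
  have hpd : DifferentiableAt ℝ p y := diffAt_pi_of_sec hUE hsub.1 hy
  have hPw : Pmat p y *ᵥ w = 0 := (isVert_iff hpd w).1 hw
  rw [ip_eq_dot, dot_mulVec_left]
  have hLt : (LmatM gE p y)ᵀ *ᵥ (gE y *ᵥ w) = ((GramM gE p y)⁻¹)ᵀ *ᵥ (Pmat p y *ᵥ w) := by
    unfold LmatM
    rw [Matrix.transpose_mul, Matrix.transpose_mul, Matrix.transpose_transpose,
      ginv_transpose hgE hy]
    rw [Matrix.mulVec_mulVec, Matrix.mulVec_mulVec, Matrix.mul_assoc, Matrix.mul_assoc,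
      ginv_mul_met hgE hy, Matrix.mul_one]
  rw [hLt, hPw, Matrix.mulVec_zero, dotProduct_zero]

/-- Pointwise horizontal projection. -/
def horP (gE : Met m) (p : Pt m → Pt nb) (y : Pt m) (u : Fin m → ℝ) : Fin m → ℝ :=
  LmatM gE p y *ᵥ (Pmat p y *ᵥ u)

theorem horP_hor (hUE : IsOpen UE) (hgE : IsRiemannOn UE gE)
    (hsub : IsRiemSubmersionOn UE gE gB p) {y : Pt m} (hy : y ∈ UE) (u : Fin m → ℝ) :
    IsHor gE p y (horP gE p y u) := Lmat_hor hUE hgE hsub hy _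

theorem horP_push (hUE : IsOpen UE) (hgE : IsRiemannOn UE gE)
    (hsub : IsRiemSubmersionOn UE gE gB p) {y : Pt m} (hy : y ∈ UE) (u : Fin m → ℝ) :
    Pmat p y *ᵥ horP gE p y u = Pmat p y *ᵥ u := Lmat_push hUE hgE hsub hy _

theorem vert_sub_horP (hUE : IsOpen UE) (hgE : IsRiemannOn UE gE)
    (hsub : IsRiemSubmersionOn UE gE gB p) {y : Pt m} (hy : y ∈ UE) (u : Fin m → ℝ) :
    IsVert p y (fun k => u k - horP gE p y u k) := by
  have hpd : DifferentiableAt ℝ p y := diffAt_pi_of_sec hUE hsub.1 hy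
  rw [isVert_iff hpd]
  have : (fun k => u k - horP gE p y u k) = u - horP gE p y u := rfl
  rw [this, Matrix.mulVec_sub, horP_push hUE hgE hsub hy, sub_self]

theorem IsHor.sub {y : Pt m} {h h' : Fin m → ℝ} (hh : IsHor gE p y h)
    (hh' : IsHor gE p y h') : IsHor gE p y (fun k => h k - h' k) := by
  intro w hw
  rw [ip_sub_left, hh w hw, hh' w hw, sub_zero]

theorem decomp_unique (hUE : IsOpen UE) (hgE : IsRiemannOn UE gE)
    (hsub : IsRiemSubmersionOn UE gE gB p) {y : Pt m} (hy : y ∈ UE)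
    {h v u : Fin m → ℝ} (hh : IsHor gE p y h) (hv : IsVert p y v) (hsum : h + v = u) :
    h = horP gE p y u ∧ v = fun k => u k - horP gE p y u k := by
  have hpd : DifferentiableAt ℝ p y := diffAt_pi_of_sec hUE hsub.1 hy
  set d : Fin m → ℝ := fun k => h k - horP gE p y u k with hd
  have hdhor : IsHor gE p y d := hh.sub (horP_hor hUE hgE hsub hy u)
  have hdvert : IsVert p y d := by
    rw [isVert_iff hpd]
    have : d = h - horP gE p y u := rfl
    rw [this, Matrix.mulVec_sub, horP_push hUE hgE hsub hy, ← hsum, Matrix.mulVec_add,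
      (isVert_iff hpd v).1 hv, add_zero, sub_self]
  have hd0 : d = 0 := posdef_ip_self (hgE.2 y hy).2 (hdhor d hdvert)
  have hh' : h = horP gE p y u := by
    funext k
    have := congrFun hd0 k
    simp only [hd, Pi.zero_apply] at this
    linarith
  refine ⟨hh', ?_⟩
  funext k
  have := congrFun hsum k
  rw [← hh']
  simp only [Pi.add_apply] at this
  simp [← this]

theorem ip_add_right (g : Met m) (x : Pt m) (w u v : Fin m → ℝ) :
    ip g x w (fun k => u k + v k) = ip g x w u + ip g x w v := by
  unfold ip
  rw [← Finset.sum_add_distrib]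
  refine Finset.sum_congr rfl fun i _ => ?_
  rw [← Finset.sum_add_distrib]
  exact Finset.sum_congr rfl fun j _ => by ring

/-- Inner products decompose into base and vertical parts. -/
theorem ip_decomp (hUE : IsOpen UE) (hgE : IsRiemannOn UE gE)
    (hsub : IsRiemSubmersionOn UE gE gB p) {y : Pt m} (hy : y ∈ UE)
    {h v u h' v' u' : Fin m → ℝ}
    (hh : IsHor gE p y h) (hv : IsVert p y v) (hsum : h + v = u)
    (hh' : IsHor gE p y h') (hv' : IsVert p y v') (hsum' : h' + v' = u') :
    ip gE y u u' = ip gB (p y) (fderiv ℝ p y u) (fderiv ℝ p y u') + ip gE y v v' := by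
  have hsym := (hgE.2 y hy).1
  have e1 : ip gE y u u' = ip gE y h u' + ip gE y v u' := by
    rw [← hsum]
    have : (h + v : Fin m → ℝ) = fun k => h k + v k := rfl
    rw [this, ip_add_left]
  have e2 : ip gE y h u' = ip gE y h h' := by
    rw [← hsum']
    have : (h' + v' : Fin m → ℝ) = fun k => h' k + v' k := rfl
    rw [this, ip_add_right, hh v' hv', add_zero]
  have e3 : ip gE y v u' = ip gE y v v' := by
    rw [← hsum']
    have : (h' + v' : Fin m → ℝ) = fun k => h' k + v' k := rfl
    rw [this, ip_add_right, ip_symm hsym v h', hh' v hv, zero_add]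
  have e4 : ip gE y h h' = ip gB (p y) (fderiv ℝ p y h) (fderiv ℝ p y h') :=
    ((hsub.2 y hy).2 h h' hh hh').symm
  have e5 : fderiv ℝ p y h = fderiv ℝ p y u := by
    rw [← hsum, map_add, (hv : fderiv ℝ p y v = 0), add_zero]
  have e6 : fderiv ℝ p y h' = fderiv ℝ p y u' := by
    rw [← hsum', map_add, (hv' : fderiv ℝ p y v' = 0), add_zero]
  rw [e1, e2, e3, e4, e5, e6]

/-- A horizontal vector is recovered from its pushforward. -/
theorem hor_eq_horP (hUE : IsOpen UE) (hgE : IsRiemannOn UE gE)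
    (hsub : IsRiemSubmersionOn UE gE gB p) {y : Pt m} (hy : y ∈ UE)
    {h : Fin m → ℝ} (hh : IsHor gE p y h) : h = horP gE p y h := by
  have h0 : IsVert p y (0 : Fin m → ℝ) := by
    show fderiv ℝ p y 0 = 0; rw [map_zero]
  exact (decomp_unique hUE hgE hsub hy hh h0 (add_zero h)).1

end Submersion
end RG
namespace RG
open Matrix

section Smoothness
variable {m nb : ℕ} {UE : Set (Pt m)} {gE : Met m} {gB : Met nb} {p : Pt m → Pt nb}

theorem smooth_GramM (hUE : IsOpen UE) (hgE : IsRiemannOn UE gE)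
    (hsub : IsRiemSubmersionOn UE gE gB p) : SmoothMat UE (GramM gE p) :=
  ((smooth_Pmat hUE hsub.1).mul (smooth_ginv hUE hgE)).mul (smooth_Pmat hUE hsub.1).transpose

theorem smooth_LmatM (hUE : IsOpen UE) (hgE : IsRiemannOn UE gE)
    (hsub : IsRiemSubmersionOn UE gE gB p) : SmoothMat UE (LmatM gE p) :=
  ((smooth_ginv hUE hgE).mul (smooth_Pmat hUE hsub.1).transpose).mul
    (SmoothMat.inv (smooth_GramM hUE hgE hsub)
      fun y hy => ((gram_posdef hUE hgE hsub hy).det_pos).ne')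

theorem smoothSec_mulVec_const {n q : ℕ} {U : Set (Pt n)} {M : Pt n → Matrix (Fin n) (Fin q) ℝ}
    (hM : SmoothMat U M) (c : Fin q → ℝ) : SmoothSec U (fun y => M y *ᵥ c) := by
  intro k
  have : (fun y => (M y *ᵥ c) k) = fun y => ∑ a, M y k a * c a := rfl
  rw [this]
  exact ContDiffOn.sum fun a _ => (hM k a).mul contDiffOn_const

/-- Vertical extension of a fixed vector `w`. -/
def Wfield (gE : Met m) (p : Pt m → Pt nb) (w : Fin m → ℝ) : VF m :=
  fun y k => w k - (LmatM gE p y *ᵥ (Pmat p y *ᵥ w)) k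

theorem smooth_Wfield (hUE : IsOpen UE) (hgE : IsRiemannOn UE gE)
    (hsub : IsRiemSubmersionOn UE gE gB p) (w : Fin m → ℝ) :
    SmoothSec UE (Wfield gE p w) := by
  intro k
  have : (fun y => Wfield gE p w y k)
      = fun y => w k - ((fun y => LmatM gE p y * Pmat p y) y *ᵥ w) k := by
    funext y
    rw [Wfield]
    rw [← Matrix.mulVec_mulVec]
  rw [this]
  exact contDiffOn_const.sub
    (smoothSec_mulVec_const (SmoothMat.mul (smooth_LmatM hUE hgE hsub) (smooth_Pmat hUE hsub.1)) w k)

theorem Wfield_vert (hUE : IsOpen UE) (hgE : IsRiemannOn UE gE)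
    (hsub : IsRiemSubmersionOn UE gE gB p) (w : Fin m → ℝ) {y : Pt m} (hy : y ∈ UE) :
    IsVert p y (Wfield gE p w y) := by
  have : Wfield gE p w y = fun k => w k - horP gE p y w k := rfl
  rw [this]
  exact vert_sub_horP hUE hgE hsub hy w

theorem Wfield_at (hUE : IsOpen UE) (hsub : IsRiemSubmersionOn UE gE gB p)
    {x : Pt m} (hx : x ∈ UE) {w : Fin m → ℝ} (hw : IsVert p x w) :
    Wfield gE p w x = w := by
  have hpd : DifferentiableAt ℝ p x := diffAt_pi_of_sec hUE hsub.1 hx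
  have h0 : Pmat p x *ᵥ w = 0 := (isVert_iff hpd w).1 hw
  funext k
  rw [Wfield, h0, Matrix.mulVec_zero]
  simp

/-- Smoothness of Christoffel symbols. -/
theorem smooth_chr {n : ℕ} {U : Set (Pt n)} (hU : IsOpen U) {g : Met n}
    (hg : IsRiemannOn U g) (k i j : Fin n) : ContDiffOn ℝ (⊤ : ℕ∞) (fun y => chr g k i j y) U := by
  have : (fun y => chr g k i j y)
      = fun y => (1/2) * ∑ l, ginv g y k l *
          (fderiv ℝ (fun z => g z j l) y (Pi.single i 1)
            + fderiv ℝ (fun z => g z i l) y (Pi.single j 1)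
            - fderiv ℝ (fun z => g z i j) y (Pi.single l 1)) := rfl
  rw [this]
  refine contDiffOn_const.mul (ContDiffOn.sum fun l _ => (smooth_ginv hU hg k l).mul ?_)
  exact ((smooth_fderiv_apply hU (hg.1 j l) _).add (smooth_fderiv_apply hU (hg.1 i l) _)).sub
    (smooth_fderiv_apply hU (hg.1 i j) _)

/-- Smoothness of covariant derivatives. -/
theorem smooth_covV {n : ℕ} {U : Set (Pt n)} (hU : IsOpen U) {g : Met n}
    (hg : IsRiemannOn U g) {A B : VF n} (hA : SmoothSec U A) (hB : SmoothSec U B) :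
    SmoothSec U (covV g A B) := by
  intro k
  have hApi : ContDiffOn ℝ (⊤ : ℕ∞) A U := contDiffOn_pi.2 hA
  have h1 : ContDiffOn ℝ (⊤ : ℕ∞) (fun y => fderiv ℝ (fun z => B z k) y (A y)) U :=
    (((hB k).fderiv_of_isOpen hU (by simp)).clm_apply hApi)
  refine h1.add (ContDiffOn.sum fun i _ => ContDiffOn.sum fun j _ => ?_)
  exact ((smooth_chr hU hg k i j).mul (hA i)).mul (hB j)

/-- Smoothness of metric pairings. -/
theorem smooth_gV {n : ℕ} {U : Set (Pt n)} {g : Met n}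
    (hg : IsRiemannOn U g) {A B : VF n} (hA : SmoothSec U A) (hB : SmoothSec U B) :
    ContDiffOn ℝ (⊤ : ℕ∞) (gV g A B) U := by
  have : gV g A B = fun y => ∑ i, ∑ j, g y i j * A y i * B y j := rfl
  rw [this]
  exact ContDiffOn.sum fun i _ => ContDiffOn.sum fun j _ =>
    ((hg.1 i j).mul (hA i)).mul (hB j)

end Smoothness
end RG
namespace RG
open Matrix

section Core
variable {m nb : ℕ} {UE : Set (Pt m)} {UB : Set (Pt nb)}
  {gE : Met m} {gB : Met nb} {p : Pt m → Pt nb}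

theorem ip_zero_right {n : ℕ} (g : Met n) (x : Pt n) (v : Fin n → ℝ) :
    ip g x v 0 = 0 := by simp [ip]

theorem ip_zero_left {n : ℕ} (g : Met n) (x : Pt n) (v : Fin n → ℝ) :
    ip g x 0 v = 0 := by simp [ip]

theorem ip_sub3 {n : ℕ} (g : Met n) (x : Pt n) (a b c w : Fin n → ℝ) :
    ip g x (fun k => a k - b k - c k) w = ip g x a w - ip g x b w - ip g x c w := by
  unfold ip
  rw [← Finset.sum_sub_distrib, ← Finset.sum_sub_distrib]
  refine Finset.sum_congr rfl fun i _ => ?_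
  rw [← Finset.sum_sub_distrib, ← Finset.sum_sub_distrib]
  exact Finset.sum_congr rfl fun j _ => by ring

theorem horP_decomp_sum (gE : Met m) (p : Pt m → Pt nb) (y : Pt m) (u : Fin m → ℝ) :
    horP gE p y u + (fun k => u k - horP gE p y u k) = u := by
  funext k; simp

theorem isVert_zero {y : Pt m} : IsVert p y (0 : Fin m → ℝ) := by
  show fderiv ℝ p y 0 = 0; rw [map_zero]

theorem fderiv_eq_zero_on {n : ℕ} {U : Set (Pt n)} (hU : IsOpen U) {f : Pt n → ℝ}
    {x : Pt n} (hx : x ∈ U) (hf0 : ∀ y ∈ U, f y = 0) : fderiv ℝ f x = 0 := by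
  have hEq : f =ᶠ[nhds x] fun _ => (0 : ℝ) := by
    filter_upwards [hU.mem_nhds hx] with y hy using hf0 y hy
  rw [hEq.fderiv_eq]
  exact fderiv_const_apply 0

/-- Derivative transfer along `p`. -/
theorem dtransfer (hUE : IsOpen UE) {f : Pt m → ℝ} {F : Pt nb → ℝ} {x : Pt m}
    (hx : x ∈ UE) (hpd : DifferentiableAt ℝ p x)
    (hEq : ∀ y ∈ UE, f y = F (p y)) (hF : DifferentiableAt ℝ F (p x)) (u : Fin m → ℝ) :
    fderiv ℝ f x u = fderiv ℝ F (p x) (fderiv ℝ p x u) := by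
  have hev : f =ᶠ[nhds x] fun y => F (p y) := by
    filter_upwards [hUE.mem_nhds hx] with y hy using hEq y hy
  rw [hev.fderiv_eq, fderiv_scalar_comp hpd hF]

/-- Base identity for pairings of horizontal related fields. -/
theorem gV_base (hUE : IsOpen UE) (hgE : IsRiemannOn UE gE)
    (hsub : IsRiemSubmersionOn UE gE gB p)
    {A B : VF m} {Ab Bb : VF nb}
    (hAhor : ∀ y ∈ UE, IsHor gE p y (A y)) (hArel : ∀ y ∈ UE, fderiv ℝ p y (A y) = Ab (p y))
    (hBhor : ∀ y ∈ UE, IsHor gE p y (B y)) (hBrel : ∀ y ∈ UE, fderiv ℝ p y (B y) = Bb (p y))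
    {y : Pt m} (hy : y ∈ UE) : gV gE A B y = gV gB Ab Bb (p y) := by
  have h := ip_decomp hUE hgE hsub hy (hAhor y hy) isVert_zero (add_zero (A y))
    (hBhor y hy) isVert_zero (add_zero (B y))
  have e : gV gE A B y = ip gE y (A y) (B y) := rfl
  rw [e, h, hArel y hy, hBrel y hy, ip_zero_right, add_zero]
  rfl

/-- Pairing of a bracket with a horizontal related field pushes down. -/
theorem bracket_pair (hUE : IsOpen UE) (hUB : IsOpen UB) (hgE : IsRiemannOn UE gE)
    (hp : Set.MapsTo p UE UB) (hsub : IsRiemSubmersionOn UE gE gB p)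
    {A B C : VF m} {Ab Bb Cb : VF nb}
    (hA : SmoothSec UE A) (hB : SmoothSec UE B)
    (hAb : SmoothSec UB Ab) (hBb : SmoothSec UB Bb)
    (hArel : ∀ y ∈ UE, fderiv ℝ p y (A y) = Ab (p y))
    (hBrel : ∀ y ∈ UE, fderiv ℝ p y (B y) = Bb (p y))
    (hChor : ∀ y ∈ UE, IsHor gE p y (C y)) (hCrel : ∀ y ∈ UE, fderiv ℝ p y (C y) = Cb (p y))
    {y : Pt m} (hy : y ∈ UE) :
    ip gE y (bracket A B y) (C y) = ip gB (p y) (bracket Ab Bb (p y)) (Cb (p y)) := by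
  have hbr := bracket_related hUE hsub.1 hA hB hy
    (fun j => ((hAb j).contDiffAt (hUB.mem_nhds (hp hy))).differentiableAt (by simp))
    (fun j => ((hBb j).contDiffAt (hUB.mem_nhds (hp hy))).differentiableAt (by simp))
    hArel hBrel
  have h := ip_decomp hUE hgE hsub hy (horP_hor hUE hgE hsub hy (bracket A B y))
    (vert_sub_horP hUE hgE hsub hy _) (horP_decomp_sum gE p y _)
    (hChor y hy) isVert_zero (add_zero (C y))
  rw [h, hbr, hCrel y hy, ip_zero_right, add_zero]

theorem bracket_zero_right {q : ℕ} (Cb : VF q) (z : Pt q) :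
    bracket Cb (fun _ _ => (0:ℝ)) z = 0 := by
  funext k
  unfold bracket
  have h1 : fderiv ℝ (fun _ : Pt q => (0:ℝ)) z = 0 := fderiv_const_apply 0
  have h2 : ((fun _ _ => (0:ℝ)) z : Fin q → ℝ) = 0 := rfl
  rw [show (fun y : Pt q => (fun _ _ => (0:ℝ)) y k) = fun _ : Pt q => (0:ℝ) from rfl,
    h1, h2, map_zero]
  simp

/-- Alternation: vertical pairing of `∇_A B + ∇_B A` vanishes. -/
theorem altern (hUE : IsOpen UE) (hUB : IsOpen UB) (hgE : IsRiemannOn UE gE)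
    (hgB : IsRiemannOn UB gB) (hp : Set.MapsTo p UE UB)
    (hsub : IsRiemSubmersionOn UE gE gB p)
    {A B : VF m} {Ab Bb : VF nb}
    (hA : SmoothSec UE A) (hB : SmoothSec UE B)
    (hAb : SmoothSec UB Ab) (hBb : SmoothSec UB Bb)
    (hAhor : ∀ y ∈ UE, IsHor gE p y (A y)) (hArel : ∀ y ∈ UE, fderiv ℝ p y (A y) = Ab (p y))
    (hBhor : ∀ y ∈ UE, IsHor gE p y (B y)) (hBrel : ∀ y ∈ UE, fderiv ℝ p y (B y) = Bb (p y))
    {x : Pt m} (hx : x ∈ UE) {w : Fin m → ℝ} (hw : IsVert p x w) :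
    ip gE x (covV gE A B x) w + ip gE x (covV gE B A x) w = 0 := by
  have hsym := (hgE.2 x hx).1
  set W : VF m := Wfield gE p w with hWdef
  have hWsm : SmoothSec UE W := smooth_Wfield hUE hgE hsub w
  have hWvert : ∀ y ∈ UE, IsVert p y (W y) := fun y hy => Wfield_vert hUE hgE hsub w hy
  have hWx : W x = w := Wfield_at hUE hsub hx hw
  have hWrel : ∀ y ∈ UE, fderiv ℝ p y (W y) = (fun _ _ => (0:ℝ)) (p y) :=
    fun y hy => hWvert y hy
  -- brackets with W are vertical at x
  have hbrv : ∀ (C : VF m) (Cb : VF nb), SmoothSec UE C → SmoothSec UB Cb →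
      (∀ y ∈ UE, fderiv ℝ p y (C y) = Cb (p y)) → IsVert p x (bracket W C x) := by
    intro C Cb hC hCb hCrel
    have hbr := bracket_related hUE hsub.1 hWsm hC hx
      (fun j => differentiableAt_const (0:ℝ))
      (fun j => ((hCb j).contDiffAt (hUB.mem_nhds (hp hx))).differentiableAt (by simp))
      hWrel hCrel
    show fderiv ℝ p x (bracket W C x) = 0
    rw [hbr]
    funext k
    unfold bracket
    have h1 : fderiv ℝ (fun _ : Pt nb => (0:ℝ)) (p x) = 0 := fderiv_const_apply 0
    have h2 : ((fun _ _ => (0:ℝ)) (p x) : Fin nb → ℝ) = 0 := rfl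
    rw [show (fun y : Pt nb => (fun _ _ => (0:ℝ)) y k) = fun _ : Pt nb => (0:ℝ) from rfl,
      h1, h2, map_zero]
    simp
  -- step for a single pair
  have step : ∀ (C D : VF m) (Cb Db : VF nb), SmoothSec UE C → SmoothSec UE D →
      SmoothSec UB Cb → SmoothSec UB Db →
      (∀ y ∈ UE, IsHor gE p y (C y)) → (∀ y ∈ UE, fderiv ℝ p y (C y) = Cb (p y)) →
      (∀ y ∈ UE, IsHor gE p y (D y)) → (∀ y ∈ UE, fderiv ℝ p y (D y) = Db (p y)) →
      ip gE x (covV gE C D x) w = - ip gE x (D x) (covV gE W C x) := by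
    intro C D Cb Db hC hD hCb hDb hChor hCrel hDhor hDrel
    have hDW0 : ∀ y ∈ UE, gV gE D W y = 0 := by
      intro y hy
      exact hDhor y hy (W y) (hWvert y hy)
    have hcpt := compat hUE hgE hD hWsm hx (C x)
    have hz : fderiv ℝ (gV gE D W) x (C x) = 0 := by
      rw [fderiv_eq_zero_on hUE hx hDW0]; rfl
    rw [hz] at hcpt
    have c1 : covD gE (C x) D x = covV gE C D x := rfl
    have c2 : covD gE (C x) W x = covV gE C W x := rfl
    rw [c1, c2, hWx] at hcpt
    -- torsion : ∇_C W = ∇_W C + [C, W] ... we use covV C W = fun k => covV W C k - bracket W C k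
    have htor : covV gE C W x = fun k => covV gE W C x k - bracket W C x k :=
      torsion hUE hgE W C hx
    rw [htor, ip_sub_right] at hcpt
    have hDbr : ip gE x (D x) (bracket W C x) = 0 :=
      hDhor x hx (bracket W C x) (hbrv C Cb hC hCb hCrel)
    rw [hDbr] at hcpt
    linarith
  have s1 := step A B Ab Bb hA hB hAb hBb hAhor hArel hBhor hBrel
  have s2 := step B A Bb Ab hB hA hBb hAb hBhor hBrel hAhor hArel
  -- the sum equals -W⟨A,B⟩ = 0
  have hcpt2 := compat hUE hgE hA hB hx (W x)
  have c3 : covD gE (W x) A x = covV gE W A x := rfl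
  have c4 : covD gE (W x) B x = covV gE W B x := rfl
  rw [c3, c4] at hcpt2
  have hz2 : fderiv ℝ (gV gE A B) x (W x) = 0 := by
    have hEq : ∀ y ∈ UE, gV gE A B y = gV gB Ab Bb (p y) :=
      fun y hy => gV_base hUE hgE hsub hAhor hArel hBhor hBrel hy
    have hF : DifferentiableAt ℝ (gV gB Ab Bb) (p x) :=
      ((smooth_gV hgB hAb hBb).contDiffAt (hUB.mem_nhds (hp hx))).differentiableAt (by simp)
    rw [dtransfer hUE hx (diffAt_pi_of_sec hUE hsub.1 hx) hEq hF (W x), hWx, hw, map_zero]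
  rw [hz2] at hcpt2
  have e1 : ip gE x (covV gE W A x) (B x) = ip gE x (B x) (covV gE W A x) :=
    ip_symm hsym _ _
  rw [s1, s2]
  rw [e1] at hcpt2
  linarith

/-- Vertical pairing of the covariant derivative. -/
theorem vert_pair (hUE : IsOpen UE) (hUB : IsOpen UB) (hgE : IsRiemannOn UE gE)
    (hgB : IsRiemannOn UB gB) (hp : Set.MapsTo p UE UB)
    (hsub : IsRiemSubmersionOn UE gE gB p)
    {A B : VF m} {Ab Bb : VF nb}
    (hA : SmoothSec UE A) (hB : SmoothSec UE B)
    (hAb : SmoothSec UB Ab) (hBb : SmoothSec UB Bb)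
    (hAhor : ∀ y ∈ UE, IsHor gE p y (A y)) (hArel : ∀ y ∈ UE, fderiv ℝ p y (A y) = Ab (p y))
    (hBhor : ∀ y ∈ UE, IsHor gE p y (B y)) (hBrel : ∀ y ∈ UE, fderiv ℝ p y (B y) = Bb (p y))
    {x : Pt m} (hx : x ∈ UE) {w : Fin m → ℝ} (hw : IsVert p x w) :
    ip gE x (covV gE A B x) w = (1/2) * ip gE x (bracket A B x) w := by
  have halt := altern hUE hUB hgE hgB hp hsub hA hB hAb hBb hAhor hArel hBhor hBrel hx hw
  have htor : covV gE B A x = fun k => covV gE A B x k - bracket A B x k :=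
    torsion hUE hgE A B hx
  rw [htor, ip_sub_left] at halt
  linarith

/-- Pushforward of the covariant derivative of horizontal related fields. -/
theorem push_cov (hUE : IsOpen UE) (hUB : IsOpen UB) (hgE : IsRiemannOn UE gE)
    (hgB : IsRiemannOn UB gB) (hp : Set.MapsTo p UE UB)
    (hsub : IsRiemSubmersionOn UE gE gB p)
    {A B : VF m} {Ab Bb : VF nb}
    (hA : SmoothSec UE A) (hB : SmoothSec UE B)
    (hAb : SmoothSec UB Ab) (hBb : SmoothSec UB Bb)
    (hAhor : ∀ y ∈ UE, IsHor gE p y (A y)) (hArel : ∀ y ∈ UE, fderiv ℝ p y (A y) = Ab (p y))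
    (hBhor : ∀ y ∈ UE, IsHor gE p y (B y)) (hBrel : ∀ y ∈ UE, fderiv ℝ p y (B y) = Bb (p y))
    {x : Pt m} (hx : x ∈ UE) :
    fderiv ℝ p x (covV gE A B x) = covV gB Ab Bb (p x) := by
  have hpxB := hp hx
  have hsymB := (hgB.2 (p x) hpxB).1
  have hpd : DifferentiableAt ℝ p x := diffAt_pi_of_sec hUE hsub.1 hx
  have key : ∀ t : Fin nb → ℝ,
      ip gB (p x) (fderiv ℝ p x (covV gE A B x)) t
        = ip gB (p x) (covV gB Ab Bb (p x)) t := by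
    intro t
    set Z : VF m := fun y => LmatM gE p y *ᵥ t with hZdef
    set Zb : VF nb := fun _ => t with hZbdef
    have hZsm : SmoothSec UE Z := smoothSec_mulVec_const (smooth_LmatM hUE hgE hsub) t
    have hZb : SmoothSec UB Zb := fun j => contDiffOn_const
    have hZhor : ∀ y ∈ UE, IsHor gE p y (Z y) := fun y hy => Lmat_hor hUE hgE hsub hy t
    have hZrel : ∀ y ∈ UE, fderiv ℝ p y (Z y) = Zb (p y) := by
      intro y hy
      rw [fderiv_eq_Pmat (diffAt_pi_of_sec hUE hsub.1 hy)]
      exact Lmat_push hUE hgE hsub hy t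
    have lhs_eq : ip gE x (covV gE A B x) (Z x)
        = ip gB (p x) (fderiv ℝ p x (covV gE A B x)) t := by
      have h := ip_decomp hUE hgE hsub hx (horP_hor hUE hgE hsub hx (covV gE A B x))
        (vert_sub_horP hUE hgE hsub hx _) (horP_decomp_sum gE p x _)
        (hZhor x hx) isVert_zero (add_zero (Z x))
      rw [h, hZrel x hx, ip_zero_right, add_zero]
    have kosE := koszul hUE hgE hA hB hZsm hx
    have kosB := koszul hUB hgB hAb hBb hZb hpxB
    -- term matching
    have m1 : fderiv ℝ (gV gE B Z) x (A x) = fderiv ℝ (gV gB Bb Zb) (p x) (Ab (p x)) := by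
      have := dtransfer hUE hx hpd
        (fun y hy => gV_base hUE hgE hsub hBhor hBrel hZhor hZrel hy)
        (((smooth_gV hgB hBb hZb).contDiffAt (hUB.mem_nhds hpxB)).differentiableAt (by simp))
        (A x)
      rw [this, hArel x hx]
    have m2 : fderiv ℝ (gV gE A Z) x (B x) = fderiv ℝ (gV gB Ab Zb) (p x) (Bb (p x)) := by
      have := dtransfer hUE hx hpd
        (fun y hy => gV_base hUE hgE hsub hAhor hArel hZhor hZrel hy)
        (((smooth_gV hgB hAb hZb).contDiffAt (hUB.mem_nhds hpxB)).differentiableAt (by simp))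
        (B x)
      rw [this, hBrel x hx]
    have m3 : fderiv ℝ (gV gE A B) x (Z x) = fderiv ℝ (gV gB Ab Bb) (p x) (Zb (p x)) := by
      have := dtransfer hUE hx hpd
        (fun y hy => gV_base hUE hgE hsub hAhor hArel hBhor hBrel hy)
        (((smooth_gV hgB hAb hBb).contDiffAt (hUB.mem_nhds hpxB)).differentiableAt (by simp))
        (Z x)
      rw [this, hZrel x hx]
    have m4 : ip gE x (bracket A B x) (Z x)
        = ip gB (p x) (bracket Ab Bb (p x)) (Zb (p x)) :=
      bracket_pair hUE hUB hgE hp hsub hA hB hAb hBb hArel hBrel hZhor hZrel hx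
    have m5 : ip gE x (B x) (bracket A Z x)
        = ip gB (p x) (Bb (p x)) (bracket Ab Zb (p x)) := by
      have hsymE := (hgE.2 x hx).1
      rw [ip_symm hsymE, ip_symm hsymB]
      exact bracket_pair hUE hUB hgE hp hsub hA hZsm hAb hZb hArel hZrel hBhor hBrel hx
    have m6 : ip gE x (A x) (bracket B Z x)
        = ip gB (p x) (Ab (p x)) (bracket Bb Zb (p x)) := by
      have hsymE := (hgE.2 x hx).1
      rw [ip_symm hsymE, ip_symm hsymB]
      exact bracket_pair hUE hUB hgE hp hsub hB hZsm hBb hZb hBrel hZrel hAhor hArel hx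
    rw [m1, m2, m3, m4, m5, m6] at kosE
    rw [← lhs_eq]
    linarith
  set z : Fin nb → ℝ := fderiv ℝ p x (covV gE A B x) with hz
  set z' : Fin nb → ℝ := covV gB Ab Bb (p x) with hz'
  have hd : ip gB (p x) (fun k => z k - z' k) (fun k => z k - z' k) = 0 := by
    rw [ip_sub_left, key, sub_self]
  have := posdef_ip_self (hgB.2 (p x) hpxB).2 hd
  funext k
  have hk := congrFun this k
  simp only [Pi.zero_apply] at hk
  linarith

/-- Pairing of covariant derivatives with horizontal fields pushes down. -/
theorem cov_pair (hUE : IsOpen UE) (hUB : IsOpen UB) (hgE : IsRiemannOn UE gE)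
    (hgB : IsRiemannOn UB gB) (hp : Set.MapsTo p UE UB)
    (hsub : IsRiemSubmersionOn UE gE gB p)
    {A B C : VF m} {Ab Bb Cb : VF nb}
    (hA : SmoothSec UE A) (hB : SmoothSec UE B)
    (hAb : SmoothSec UB Ab) (hBb : SmoothSec UB Bb)
    (hAhor : ∀ y ∈ UE, IsHor gE p y (A y)) (hArel : ∀ y ∈ UE, fderiv ℝ p y (A y) = Ab (p y))
    (hBhor : ∀ y ∈ UE, IsHor gE p y (B y)) (hBrel : ∀ y ∈ UE, fderiv ℝ p y (B y) = Bb (p y))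
    (hChor : ∀ y ∈ UE, IsHor gE p y (C y)) (hCrel : ∀ y ∈ UE, fderiv ℝ p y (C y) = Cb (p y))
    {y : Pt m} (hy : y ∈ UE) :
    ip gE y (covV gE A B y) (C y) = ip gB (p y) (covV gB Ab Bb (p y)) (Cb (p y)) := by
  have h := ip_decomp hUE hgE hsub hy (horP_hor hUE hgE hsub hy (covV gE A B y))
    (vert_sub_horP hUE hgE hsub hy _) (horP_decomp_sum gE p y _)
    (hChor y hy) isVert_zero (add_zero (C y))
  rw [h, push_cov hUE hUB hgE hgB hp hsub hA hB hAb hBb hAhor hArel hBhor hBrel hy,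
    hCrel y hy, ip_zero_right, add_zero]

end Core
end RG
namespace RG
open Matrix

theorem ip_add_left' {n : ℕ} (g : Met n) (x : Pt n) (u v w : Fin n → ℝ) :
    ip g x (u + v) w = ip g x u w + ip g x v w := by
  have e : (u + v) = fun k => u k + v k := rfl
  rw [e, ip_add_left]

theorem ip_neg_left {n : ℕ} (g : Met n) (x : Pt n) (u w : Fin n → ℝ) :
    ip g x (fun k => - u k) w = - ip g x u w := by
  unfold ip
  rw [← Finset.sum_neg_distrib]
  refine Finset.sum_congr rfl fun i _ => ?_
  rw [← Finset.sum_neg_distrib]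
  exact Finset.sum_congr rfl fun j _ => by ring

theorem bracket_self {n : ℕ} (X : VF n) (x : Pt n) : bracket X X x = 0 := by
  funext k; unfold bracket; exact sub_self _

theorem bracket_antisym {n : ℕ} (X Y : VF n) (x : Pt n) :
    bracket Y X x = fun k => - bracket X Y x k := by
  funext k; unfold bracket; ring

theorem covD_dir_split {n : ℕ} (g : Met n) (u₁ u₂ : Fin n → ℝ) (Y : VF n) (x : Pt n) :
    covD g (u₁ + u₂) Y x = fun k => covD g u₁ Y x k + covD g u₂ Y x k := by
  funext k
  unfold covD
  rw [map_add]
  have : ∀ i ∈ Finset.univ, (∑ j, chr g k i j x * (u₁ + u₂) i * Y x j)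
      = (∑ j, chr g k i j x * u₁ i * Y x j) + ∑ j, chr g k i j x * u₂ i * Y x j := by
    intro i _
    rw [← Finset.sum_add_distrib]
    exact Finset.sum_congr rfl fun j _ => by simp [Pi.add_apply]; ring
  rw [Finset.sum_congr rfl this, Finset.sum_add_distrib]
  ring

end RG

open Matrix

/-- **O'Neill's formula**: for a Riemannian submersion `p : (E,g_E) → (B,g_B)`
and horizontal vector fields `X Y` on `E` that are `p`-related to vector fields
`Xb Yb` on `B`, at every `x ∈ E`:
`g_B(R^B(p_*X_x, p_*Y_x) p_*Y_x, p_*X_x)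
  = g_E(R^E(X_x,Y_x)Y_x, X_x) + (3/4)‖[X,Y]^{ver}‖²_{g_E,x}`.
(The `p`-relatedness `p_*X = Xb ∘ p` makes `p_*X_x = Xb(p x)`; the vertical
part of `[X,Y]` at `x` is encoded by quantifying over decompositions
`[X,Y](x) = h + v` with `h` horizontal and `v` vertical.) -/
theorem oneill_formula {m nb : ℕ}
    (UE : Set (Pt m)) (UB : Set (Pt nb)) (hUE : IsOpen UE) (hUB : IsOpen UB)
    (gE : Met m) (gB : Met nb) (hgE : IsRiemannOn UE gE) (hgB : IsRiemannOn UB gB)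
    (p : Pt m → Pt nb) (hp : Set.MapsTo p UE UB)
    (hsub : IsRiemSubmersionOn UE gE gB p)
    (X Y : VF m) (hX : SmoothSec UE X) (hY : SmoothSec UE Y)
    (hXhor : ∀ x ∈ UE, IsHor gE p x (X x)) (hYhor : ∀ x ∈ UE, IsHor gE p x (Y x))
    (Xb Yb : VF nb) (hXb : SmoothSec UB Xb) (hYb : SmoothSec UB Yb)
    (hXrel : ∀ x ∈ UE, fderiv ℝ p x (X x) = Xb (p x))
    (hYrel : ∀ x ∈ UE, fderiv ℝ p x (Y x) = Yb (p x)) :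
    ∀ x ∈ UE, ∀ h v : Fin m → ℝ,
      IsHor gE p x h → IsVert p x v →
      h + v = bracket X Y x →
      gV gB (Rcurv gB Xb Yb Yb) Xb (p x)
        = gV gE (Rcurv gE X Y Y) X x + (3/4) * ip gE x v v := by
  intro x hx h v hh hv hsum
  have hpxB : p x ∈ UB := hp hx
  have hpd : DifferentiableAt ℝ p x := diffAt_pi_of_sec hUE hsub.1 hx
  have hsymE := (hgE.2 x hx).1
  have hsymB := (hgB.2 (p x) hpxB).1
  have hXbd : ∀ j, DifferentiableAt ℝ (fun z => Xb z j) (p x) :=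
    fun j => ((hXb j).contDiffAt (hUB.mem_nhds hpxB)).differentiableAt (by simp)
  have hYbd : ∀ j, DifferentiableAt ℝ (fun z => Yb z j) (p x) :=
    fun j => ((hYb j).contDiffAt (hUB.mem_nhds hpxB)).differentiableAt (by simp)
  have hCYY : SmoothSec UE (covV gE Y Y) := smooth_covV hUE hgE hY hY
  have hCXY : SmoothSec UE (covV gE X Y) := smooth_covV hUE hgE hX hY
  have hCbYY : SmoothSec UB (covV gB Yb Yb) := smooth_covV hUB hgB hYb hYb
  have hCbXY : SmoothSec UB (covV gB Xb Yb) := smooth_covV hUB hgB hXb hYb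
  -- curvature splittings
  have hE : gV gE (Rcurv gE X Y Y) X x
      = ip gE x (covV gE X (covV gE Y Y) x) (X x)
        - ip gE x (covV gE Y (covV gE X Y) x) (X x)
        - ip gE x (covV gE (bracket X Y) Y x) (X x) := by
    have e : Rcurv gE X Y Y x = fun k => covV gE X (covV gE Y Y) x k
        - covV gE Y (covV gE X Y) x k - covV gE (bracket X Y) Y x k := rfl
    show ip gE x (Rcurv gE X Y Y x) (X x) = _
    rw [e, ip_sub3]
  have hB' : gV gB (Rcurv gB Xb Yb Yb) Xb (p x)
      = ip gB (p x) (covV gB Xb (covV gB Yb Yb) (p x)) (Xb (p x))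
        - ip gB (p x) (covV gB Yb (covV gB Xb Yb) (p x)) (Xb (p x))
        - ip gB (p x) (covV gB (bracket Xb Yb) Yb (p x)) (Xb (p x)) := by
    have e : Rcurv gB Xb Yb Yb (p x) = fun k => covV gB Xb (covV gB Yb Yb) (p x) k
        - covV gB Yb (covV gB Xb Yb) (p x) k - covV gB (bracket Xb Yb) Yb (p x) k := rfl
    show ip gB (p x) (Rcurv gB Xb Yb Yb (p x)) (Xb (p x)) = _
    rw [e, ip_sub3]
  -- compatibility expansions
  have cE1 := compat hUE hgE hCYY hX hx (X x)
  have cE2 := compat hUE hgE hCXY hX hx (Y x)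
  have cB1 := compat hUB hgB hCbYY hXb hpxB (Xb (p x))
  have cB2 := compat hUB hgB hCbXY hXb hpxB (Yb (p x))
  rw [show covD gE (X x) (covV gE Y Y) x = covV gE X (covV gE Y Y) x from rfl,
    show covD gE (X x) X x = covV gE X X x from rfl] at cE1
  rw [show covD gE (Y x) (covV gE X Y) x = covV gE Y (covV gE X Y) x from rfl,
    show covD gE (Y x) X x = covV gE Y X x from rfl] at cE2
  rw [show covD gB (Xb (p x)) (covV gB Yb Yb) (p x) = covV gB Xb (covV gB Yb Yb) (p x) from rfl,
    show covD gB (Xb (p x)) Xb (p x) = covV gB Xb Xb (p x) from rfl] at cB1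
  rw [show covD gB (Yb (p x)) (covV gB Xb Yb) (p x) = covV gB Yb (covV gB Xb Yb) (p x) from rfl,
    show covD gB (Yb (p x)) Xb (p x) = covV gB Yb Xb (p x) from rfl] at cB2
  -- derivative transfers
  have f1 : fderiv ℝ (gV gE (covV gE Y Y) X) x (X x)
      = fderiv ℝ (gV gB (covV gB Yb Yb) Xb) (p x) (Xb (p x)) := by
    have := dtransfer (f := gV gE (covV gE Y Y) X) (F := gV gB (covV gB Yb Yb) Xb) hUE hx hpd
      (fun y hy => cov_pair hUE hUB hgE hgB hp hsub hY hY hYb hYb hYhor hYrel hYhor hYrel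
        hXhor hXrel hy)
      (((smooth_gV hgB hCbYY hXb).contDiffAt (hUB.mem_nhds hpxB)).differentiableAt (by simp)) (X x)
    rw [this, hXrel x hx]
  have f2 : fderiv ℝ (gV gE (covV gE X Y) X) x (Y x)
      = fderiv ℝ (gV gB (covV gB Xb Yb) Xb) (p x) (Yb (p x)) := by
    have := dtransfer (f := gV gE (covV gE X Y) X) (F := gV gB (covV gB Xb Yb) Xb) hUE hx hpd
      (fun y hy => cov_pair hUE hUB hgE hgB hp hsub hX hY hXb hYb hXhor hXrel hYhor hYrel
        hXhor hXrel hy)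
      (((smooth_gV hgB hCbXY hXb).contDiffAt (hUB.mem_nhds hpxB)).differentiableAt (by simp)) (Y x)
    rw [this, hYrel x hx]
  -- vertical part of the bracket pairing
  have hbrv : ip gE x (bracket X Y x) v = ip gE x v v := by
    conv_lhs => rw [← hsum]
    rw [ip_add_left', hh v hv, zero_add]
  -- q1 : the (∇_Y Y, ∇_X X) pairing
  have q1 : ip gE x (covV gE Y Y x) (covV gE X X x)
      = ip gB (p x) (covV gB Yb Yb (p x)) (covV gB Xb Xb (p x)) := by
    have hv1 : IsVert p x (fun k => covV gE Y Y x k - horP gE p x (covV gE Y Y x) k) :=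
      vert_sub_horP hUE hgE hsub hx _
    have hv2 : IsVert p x (fun k => covV gE X X x k - horP gE p x (covV gE X X x) k) :=
      vert_sub_horP hUE hgE hsub hx _
    have hdec := ip_decomp hUE hgE hsub hx (horP_hor hUE hgE hsub hx (covV gE Y Y x)) hv1
      (horP_decomp_sum gE p x _) (horP_hor hUE hgE hsub hx (covV gE X X x)) hv2
      (horP_decomp_sum gE p x _)
    have hp1 := push_cov hUE hUB hgE hgB hp hsub hY hY hYb hYb hYhor hYrel hYhor hYrel hx
    have hp2 := push_cov hUE hUB hgE hgB hp hsub hX hX hXb hXb hXhor hXrel hXhor hXrel hx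
    have hzero : ip gE x (fun k => covV gE Y Y x k - horP gE p x (covV gE Y Y x) k)
        (fun k => covV gE X X x k - horP gE p x (covV gE X X x) k) = 0 := by
      have e0 : ip gE x (covV gE X X x)
          (fun k => covV gE Y Y x k - horP gE p x (covV gE Y Y x) k)
          = ip gE x (horP gE p x (covV gE X X x))
              (fun k => covV gE Y Y x k - horP gE p x (covV gE Y Y x) k)
            + ip gE x (fun k => covV gE X X x k - horP gE p x (covV gE X X x) k)
              (fun k => covV gE Y Y x k - horP gE p x (covV gE Y Y x) k) := by
        conv_lhs => rw [← horP_decomp_sum gE p x (covV gE X X x)]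
        rw [ip_add_left']
      have e1 : ip gE x (horP gE p x (covV gE X X x))
          (fun k => covV gE Y Y x k - horP gE p x (covV gE Y Y x) k) = 0 :=
        horP_hor hUE hgE hsub hx _ _ hv1
      have e2 : ip gE x (covV gE X X x)
          (fun k => covV gE Y Y x k - horP gE p x (covV gE Y Y x) k)
          = (1/2) * ip gE x (bracket X X x)
              (fun k => covV gE Y Y x k - horP gE p x (covV gE Y Y x) k) :=
        vert_pair hUE hUB hgE hgB hp hsub hX hX hXb hXb hXhor hXrel hXhor hXrel hx hv1
      rw [bracket_self, ip_zero_left, mul_zero] at e2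
      rw [ip_symm hsymE]
      linarith
    rw [hdec, hp1, hp2, hzero, add_zero]
  -- q2 : the (∇_X Y, ∇_Y X) pairing
  have hv1 : IsVert p x (fun k => covV gE X Y x k - horP gE p x (covV gE X Y x) k) :=
    vert_sub_horP hUE hgE hsub hx _
  have hv2 : IsVert p x (fun k => covV gE Y X x k - horP gE p x (covV gE Y X x) k) :=
    vert_sub_horP hUE hgE hsub hx _
  have hv1v : ip gE x (fun k => covV gE X Y x k - horP gE p x (covV gE X Y x) k) v
      = (1/2) * ip gE x v v := by
    have e0 : ip gE x (covV gE X Y x) v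
        = ip gE x (horP gE p x (covV gE X Y x)) v
          + ip gE x (fun k => covV gE X Y x k - horP gE p x (covV gE X Y x) k) v := by
      conv_lhs => rw [← horP_decomp_sum gE p x (covV gE X Y x)]
      rw [ip_add_left']
    have e1 : ip gE x (horP gE p x (covV gE X Y x)) v = 0 :=
      horP_hor hUE hgE hsub hx _ _ hv
    have e2 : ip gE x (covV gE X Y x) v = (1/2) * ip gE x (bracket X Y x) v :=
      vert_pair hUE hUB hgE hgB hp hsub hX hY hXb hYb hXhor hXrel hYhor hYrel hx hv
    rw [hbrv] at e2
    linarith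
  have q2 : ip gE x (covV gE X Y x) (covV gE Y X x)
      = ip gB (p x) (covV gB Xb Yb (p x)) (covV gB Yb Xb (p x))
        - (1/4) * ip gE x v v := by
    have hdec := ip_decomp hUE hgE hsub hx (horP_hor hUE hgE hsub hx (covV gE X Y x)) hv1
      (horP_decomp_sum gE p x _) (horP_hor hUE hgE hsub hx (covV gE Y X x)) hv2
      (horP_decomp_sum gE p x _)
    have hp1 := push_cov hUE hUB hgE hgB hp hsub hX hY hXb hYb hXhor hXrel hYhor hYrel hx
    have hp2 := push_cov hUE hUB hgE hgB hp hsub hY hX hYb hXb hYhor hYrel hXhor hXrel hx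
    have hvv : ip gE x (fun k => covV gE X Y x k - horP gE p x (covV gE X Y x) k)
        (fun k => covV gE Y X x k - horP gE p x (covV gE Y X x) k)
        = - (1/4) * ip gE x v v := by
      have e0 : ip gE x (covV gE Y X x)
          (fun k => covV gE X Y x k - horP gE p x (covV gE X Y x) k)
          = ip gE x (horP gE p x (covV gE Y X x))
              (fun k => covV gE X Y x k - horP gE p x (covV gE X Y x) k)
            + ip gE x (fun k => covV gE Y X x k - horP gE p x (covV gE Y X x) k)
              (fun k => covV gE X Y x k - horP gE p x (covV gE X Y x) k) := by
        conv_lhs => rw [← horP_decomp_sum gE p x (covV gE Y X x)]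
        rw [ip_add_left']
      have e1 : ip gE x (horP gE p x (covV gE Y X x))
          (fun k => covV gE X Y x k - horP gE p x (covV gE X Y x) k) = 0 :=
        horP_hor hUE hgE hsub hx _ _ hv1
      have e2 : ip gE x (covV gE Y X x)
          (fun k => covV gE X Y x k - horP gE p x (covV gE X Y x) k)
          = (1/2) * ip gE x (bracket Y X x)
              (fun k => covV gE X Y x k - horP gE p x (covV gE X Y x) k) :=
        vert_pair hUE hUB hgE hgB hp hsub hY hX hYb hXb hYhor hYrel hXhor hXrel hx hv1
      have e3 : ip gE x (bracket Y X x)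
          (fun k => covV gE X Y x k - horP gE p x (covV gE X Y x) k)
          = - ip gE x (bracket X Y x)
              (fun k => covV gE X Y x k - horP gE p x (covV gE X Y x) k) := by
        rw [bracket_antisym X Y x, ip_neg_left]
      have e4 : ip gE x (bracket X Y x)
          (fun k => covV gE X Y x k - horP gE p x (covV gE X Y x) k)
          = (1/2) * ip gE x v v := by
        conv_lhs => rw [← hsum]
        rw [ip_add_left', hh _ hv1, zero_add, ip_symm hsymE, hv1v]
      rw [ip_symm hsymE]
      rw [e3, e4] at e2
      linarith
    rw [hdec, hp1, hp2, hvv]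
    ring
  -- t3 : the bracket-direction term
  have hbrel : fderiv ℝ p x (bracket X Y x) = bracket Xb Yb (p x) :=
    bracket_related hUE hsub.1 hX hY hx hXbd hYbd hXrel hYrel
  have hfh : fderiv ℝ p x h = bracket Xb Yb (p x) := by
    have e : fderiv ℝ p x (bracket X Y x) = fderiv ℝ p x h + fderiv ℝ p x v := by
      rw [← hsum, map_add]
    rw [(hv : fderiv ℝ p x v = 0), add_zero] at e
    rw [← e, hbrel]
  have t3 : ip gE x (covV gE (bracket X Y) Y x) (X x)
      = ip gB (p x) (covV gB (bracket Xb Yb) Yb (p x)) (Xb (p x))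
        + (1/2) * ip gE x v v := by
    have esplit : ip gE x (covV gE (bracket X Y) Y x) (X x)
        = ip gE x (covD gE h Y x) (X x) + ip gE x (covD gE v Y x) (X x) := by
      rw [show covV gE (bracket X Y) Y x = covD gE (bracket X Y x) Y x from rfl]
      conv_lhs => rw [← hsum, covD_dir_split]
      rw [ip_add_left]
    -- horizontal part
    have hPh : Pmat p x *ᵥ h = bracket Xb Yb (p x) := by
      rw [← fderiv_eq_Pmat hpd, hfh]
    have hZx : (fun y => LmatM gE p y *ᵥ (bracket Xb Yb (p x))) x = h := by
      have e := hor_eq_horP hUE hgE hsub hx hh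
      show LmatM gE p x *ᵥ (bracket Xb Yb (p x)) = h
      rw [← hPh]
      exact e.symm
    have hZsm : SmoothSec UE (fun y => LmatM gE p y *ᵥ (bracket Xb Yb (p x))) :=
      smoothSec_mulVec_const (smooth_LmatM hUE hgE hsub) _
    have hZhor : ∀ y ∈ UE, IsHor gE p y (LmatM gE p y *ᵥ (bracket Xb Yb (p x))) :=
      fun y hy => Lmat_hor hUE hgE hsub hy _
    have hZrel : ∀ y ∈ UE, fderiv ℝ p y (LmatM gE p y *ᵥ (bracket Xb Yb (p x)))
        = (fun _ => bracket Xb Yb (p x)) (p y) := by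
      intro y hy
      rw [fderiv_eq_Pmat (diffAt_pi_of_sec hUE hsub.1 hy)]
      exact Lmat_push hUE hgE hsub hy _
    have part1 : ip gE x (covD gE h Y x) (X x)
        = ip gB (p x) (covV gB (bracket Xb Yb) Yb (p x)) (Xb (p x)) := by
      rw [← hZx]
      rw [show covD gE ((fun y => LmatM gE p y *ᵥ (bracket Xb Yb (p x))) x) Y x
          = covV gE (fun y => LmatM gE p y *ᵥ (bracket Xb Yb (p x))) Y x from rfl]
      have := cov_pair (Ab := fun _ => bracket Xb Yb (p x)) hUE hUB hgE hgB hp hsub hZsm hY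
        (fun j => contDiffOn_const) hYb hZhor hZrel hYhor hYrel hXhor hXrel hx
      rw [this]
      rfl
    -- vertical part
    have hWsm : SmoothSec UE (Wfield gE p v) := smooth_Wfield hUE hgE hsub v
    have hWvert : ∀ y ∈ UE, IsVert p y (Wfield gE p v y) :=
      fun y hy => Wfield_vert hUE hgE hsub v hy
    have hWx : Wfield gE p v x = v := Wfield_at hUE hsub hx hv
    have hWrel : ∀ y ∈ UE, fderiv ℝ p y (Wfield gE p v y) = (fun _ _ => (0:ℝ)) (p y) :=
      fun y hy => hWvert y hy
    have part2 : ip gE x (covD gE v Y x) (X x) = (1/2) * ip gE x v v := by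
      rw [← hWx]
      rw [show covD gE (Wfield gE p v x) Y x = covV gE (Wfield gE p v) Y x from rfl]
      rw [torsion hUE hgE Y (Wfield gE p v) hx, ip_sub_left]
      have hbrYW : ip gE x (bracket Y (Wfield gE p v) x) (X x) = 0 := by
        have hbrv2 : IsVert p x (bracket Y (Wfield gE p v) x) := by
          show fderiv ℝ p x (bracket Y (Wfield gE p v) x) = 0
          rw [bracket_related hUE hsub.1 hY hWsm hx hYbd
            (fun j => differentiableAt_const (0:ℝ)) hYrel hWrel]
          rw [bracket_zero_right]
        rw [ip_symm hsymE]
        exact hXhor x hx _ hbrv2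
      have hmain : ip gE x (covV gE Y (Wfield gE p v) x) (X x)
          = - ip gE x v (covV gE Y X x) := by
        have hcpt := compat hUE hgE hWsm hX hx (Y x)
        have hz : fderiv ℝ (gV gE (Wfield gE p v) X) x (Y x) = 0 := by
          rw [fderiv_eq_zero_on hUE hx (fun y hy => by
            show ip gE y (Wfield gE p v y) (X y) = 0
            rw [ip_symm (hgE.2 y hy).1]
            exact hXhor y hy _ (hWvert y hy))]
          rfl
        rw [hz, show covD gE (Y x) (Wfield gE p v) x = covV gE Y (Wfield gE p v) x from rfl,
          show covD gE (Y x) X x = covV gE Y X x from rfl, hWx] at hcpt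
        linarith
      have hvYX : ip gE x v (covV gE Y X x) = - (1/2) * ip gE x v v := by
        rw [ip_symm hsymE]
        rw [vert_pair hUE hUB hgE hgB hp hsub hY hX hYb hXb hYhor hYrel hXhor hXrel hx hv]
        rw [bracket_antisym X Y x, ip_neg_left, hbrv]
        ring
      rw [hmain, hvYX, hbrYW, hWx]
      ring
    rw [esplit, part1, part2]
  -- final combination
  have hq2' := q2
  rw [hE, hB']
  linarith [cE1, cE2, cB1, cB2, f1, f2, q1, hq2', t3]
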